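/- arXiv:1911.02544 — 6 statements merged into one kernel-verified Lean document; each statement's English description precedes it below -/
import Mathlib

section
/- Let A be a commutative ring. (1) If A is a strongly ISP-ring and P is a prime ideal of A, then the quotient domain A/P is an ISP-domain. (2) If A is a strongly ISP-ring and S is a multiplicatively closed subset of A, then the localization A_S is a strongly ISP-ring. (3) A finite direct product A₁ × ⋯ × Aₙ of commutative rings is a strongly ISP-ring if and only if each Aᵢ is a strongly ISP-ring. -/
/-- An ideal is *regular* if it contains a regular element (a non-zero-divisor). -/
def Ideal.IsRegularIdeal {A : Type*} [CommRing A] (I : Ideal A) : Prop :=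
  ∃ a ∈ I, a ∈ nonZeroDivisors A

/-- An ideal is *invertible* if it is regular, finitely generated and locally principal. -/
def Ideal.IsInvertibleIdeal {A : Type*} [CommRing A] (J : Ideal A) : Prop :=
  J.IsRegularIdeal ∧ J.FG ∧
    ∀ M : Ideal A, ∀ hM : M.IsMaximal,
      haveI := hM.isPrime
      (J.map (algebraMap A (Localization.AtPrime M))).IsPrincipal

/-- `I` can be written as an invertible ideal times a nonempty product of
proper radical ideals. -/
def Ideal.HasISPFactorization {A : Type*} [CommRing A] (I : Ideal A) : Prop :=
  ∃ (J : Ideal A) (L : List (Ideal A)), J.IsInvertibleIdeal ∧ L ≠ [] ∧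
    (∀ H ∈ L, H ≠ ⊤ ∧ H.IsRadical) ∧ I = J * L.prod

/-- An ISP-ring: every proper regular ideal factors as an invertible ideal times a
nonempty product of proper radical ideals. -/
def IsISPRing (A : Type*) [CommRing A] : Prop :=
  ∀ I : Ideal A, I ≠ ⊤ → I.IsRegularIdeal → I.HasISPFactorization

/-- A strongly ISP-ring: every proper ideal factors as an invertible ideal times a
nonempty product of proper radical ideals. -/
def IsStronglyISPRing (A : Type*) [CommRing A] : Prop :=
  ∀ I : Ideal A, I ≠ ⊤ → I.HasISPFactorization

/-- An ISP-domain: an integral domain in which every proper nonzero ideal factors as an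
invertible ideal times a nonempty product of proper radical ideals. -/
def IsISPDomain (A : Type*) [CommRing A] : Prop :=
  IsDomain A ∧ ∀ I : Ideal A, I ≠ ⊤ → I ≠ ⊥ → I.HasISPFactorization

section Helpers

variable {R D : Type*} [CommRing R] [CommRing D]

/-- map of a principal ideal is principal -/
theorem myISP.map_isPrincipal (f : R →+* D) {I : Ideal R} (h : I.IsPrincipal) :
    (I.map f).IsPrincipal := by
  obtain ⟨x, hx⟩ := h
  refine ⟨f x, ?_⟩
  rw [hx]
  simp [Ideal.map_span, Ideal.submodule_span_eq]

theorem myISP.map_prod_list (f : R →+* D) (l : List (Ideal R)) :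
    Ideal.map f l.prod = (l.map (Ideal.map f)).prod := by
  exact map_list_prod (Ideal.mapHom f) l

/-- key transfer lemma for locally principal -/
theorem myISP.lift_principal (ψ : R →+* D) (N : Ideal R) (hN : N.IsMaximal)
    (hu : ∀ a : N.primeCompl, IsUnit (ψ a)) (J : Ideal R)
    (hP : (J.map (algebraMap R (Localization.AtPrime N))).IsPrincipal) :
    (J.map ψ).IsPrincipal := by
  haveI := hN.isPrime
  have h1 : J.map ψ = (J.map (algebraMap R (Localization.AtPrime N))).map
      (IsLocalization.lift (S := Localization.AtPrime N) hu) := by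
    rw [Ideal.map_map, IsLocalization.lift_comp]
  rw [h1]
  exact myISP.map_isPrincipal _ hP

theorem myISP.map_radical_surj {f : R →+* D} (hf : Function.Surjective f) {H : Ideal R}
    (hker : RingHom.ker f ≤ H) (hrad : H.IsRadical) : (H.map f).IsRadical := by
  intro x hx
  obtain ⟨k, hk⟩ := hx
  obtain ⟨g, rfl⟩ := hf x
  rw [← map_pow] at hk
  have : g ^ k ∈ Ideal.comap f (H.map f) := hk
  rw [Ideal.comap_map_of_surjective f hf, show H ⊔ Ideal.comap f ⊥ = H from
    sup_eq_left.2 (le_trans (fun x hx => hx) hker)] at this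
  exact Ideal.mem_map_of_mem f (hrad ⟨k, this⟩)

theorem myISP.map_ne_top_surj {f : R →+* D} (hf : Function.Surjective f) {H : Ideal R}
    (hker : RingHom.ker f ≤ H) (hH : H ≠ ⊤) : H.map f ≠ ⊤ := by
  intro h
  apply hH
  have := congrArg (Ideal.comap f) h
  rw [Ideal.comap_map_of_surjective f hf, show H ⊔ Ideal.comap f ⊥ = H from
    sup_eq_left.2 (le_trans (fun x hx => hx) hker), Ideal.comap_top] at this
  exact this

open scoped Classical in
theorem myISP.prod_filter_ne_top (l : List (Ideal R)) :
    (l.filter (fun H => !decide (H = ⊤))).prod = l.prod := by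
  induction l with
  | nil => rfl
  | cons h t ih =>
    by_cases hh : h = ⊤
    · subst hh
      simpa [List.filter_cons, List.prod_cons, Ideal.top_mul] using ih
    · simp [List.filter_cons, hh, List.prod_cons, ih]

theorem myISP.exists_mem_prod (S : Submonoid R) (l : List (Ideal R))
    (hl : ∀ H ∈ l, ∃ s ∈ S, s ∈ H) : ∃ s ∈ S, s ∈ l.prod := by
  induction l with
  | nil => exact ⟨1, S.one_mem, by simp [List.prod_nil, Ideal.one_eq_top]⟩
  | cons h t ih =>
    obtain ⟨s, hsS, hsh⟩ := hl h (by simp)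
    obtain ⟨u, huS, hut⟩ := ih (fun H hH => hl H (by simp [hH]))
    exact ⟨s * u, S.mul_mem hsS huS, by rw [List.prod_cons]; exact Ideal.mul_mem_mul hsh hut⟩

end Helpers

section LocHelpers

variable {R : Type*} [CommRing R] (S : Submonoid R)

theorem myISP.exists_mem_of_map_eq_top {H : Ideal R}
    (h : Ideal.map (algebraMap R (Localization S)) H = ⊤) : ∃ s ∈ S, s ∈ H := by
  have h1 : (1 : Localization S) ∈ Ideal.map (algebraMap R (Localization S)) H := by
    rw [h]; trivial
  have := (IsLocalization.mk'_mem_map_algebraMap_iff S (Localization S) H 1 1).1 (by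
    simpa [IsLocalization.mk'_one] using h1)
  obtain ⟨s, hs, hsH⟩ := this
  exact ⟨s, hs, by simpa using hsH⟩

theorem myISP.map_radical_loc {H : Ideal R} (hrad : H.IsRadical) :
    (Ideal.map (algebraMap R (Localization S)) H).IsRadical := by
  intro x hx
  obtain ⟨k, hk⟩ := hx
  obtain ⟨a, s, rfl⟩ := IsLocalization.exists_mk'_eq S x
  rw [← IsLocalization.mk'_pow] at hk
  obtain ⟨u, huS, huH⟩ := (IsLocalization.mk'_mem_map_algebraMap_iff S (Localization S) H _ _).1 hk
  rcases Nat.eq_zero_or_pos k with hk0 | hk0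
  · subst hk0
    rw [pow_zero, mul_one] at huH
    refine (IsLocalization.mk'_mem_map_algebraMap_iff S (Localization S) H _ _).2 ?_
    exact ⟨u, huS, H.mul_mem_right a huH⟩
  · have heq : (u * a) ^ k = u ^ (k - 1) * (u * a ^ k) := by
      rw [mul_pow, ← mul_assoc, ← pow_succ]
      rw [Nat.sub_add_cancel hk0]
    have : (u * a) ^ k ∈ H := by
      rw [heq]
      exact H.mul_mem_left _ huH
    have hua : u * a ∈ H := hrad ⟨k, this⟩
    refine (IsLocalization.mk'_mem_map_algebraMap_iff S (Localization S) H _ _).2 ?_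
    exact ⟨u, huS, hua⟩

theorem myISP.map_nzd {a : R} (ha : a ∈ nonZeroDivisors R) :
    algebraMap R (Localization S) a ∈ nonZeroDivisors (Localization S) := by
  rw [mem_nonZeroDivisors_iff_right] at ha ⊢
  intro x hx
  obtain ⟨b, t, rfl⟩ := IsLocalization.exists_mk'_eq S x
  rw [mul_comm, IsLocalization.mul_mk'_eq_mk'_of_mul] at hx
  rw [IsLocalization.mk'_eq_zero_iff] at hx ⊢
  obtain ⟨m, hm⟩ := hx
  exact ⟨m, ha _ (by rw [mul_comm a b, ← mul_assoc] at hm; exact hm)⟩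

theorem myISP.cancel {J K : Ideal R} (hJ : J.IsInvertibleIdeal) (h : J = J * K) :
    K = ⊤ := by
  by_contra hK
  obtain ⟨M, hM, hKM⟩ := Ideal.exists_le_maximal K hK
  haveI := hM.isPrime
  obtain ⟨a, haJ, hareg⟩ := hJ.1
  set C := Localization.AtPrime M with hC
  set f := algebraMap R C with hf
  obtain ⟨x, hx⟩ := hJ.2.2 M hM
  have hx' : Ideal.map f J = Ideal.span {x} := hx
  have hreg : f a ∈ nonZeroDivisors C := myISP.map_nzd M.primeCompl hareg
  have hax : f a ∈ Ideal.map f J := Ideal.mem_map_of_mem f haJ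
  rw [hx'] at hax
  obtain ⟨c, hc⟩ := Ideal.mem_span_singleton'.1 hax
  have hmapeq : Ideal.span {x} = Ideal.span {x} * Ideal.map f K := by
    rw [← hx', ← Ideal.map_mul, ← h]
  have hxmem : x ∈ Ideal.span {x} * Ideal.map f K := by
    rw [← hmapeq]; exact Ideal.mem_span_singleton_self x
  obtain ⟨k, hk, hxk⟩ := Ideal.mem_span_singleton_mul.1 hxmem
  have hzero : f a * (1 - k) = 0 := by
    rw [← hc]; linear_combination (-c) * hxk
  have h1k : (1 : C) - k = 0 := mem_nonZeroDivisors_iff_right.1 hreg _ (by linear_combination hzero)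
  have hone : (1 : C) ∈ Ideal.map f K := by
    have : k = 1 := by linear_combination -h1k
    rwa [← this]
  have htop : Ideal.map f K = ⊤ := (Ideal.eq_top_iff_one _).2 hone
  obtain ⟨s, hsS, hsK⟩ := myISP.exists_mem_of_map_eq_top M.primeCompl htop
  exact hsS (hKM hsK)

theorem myISP.part2 {A : Type*} [CommRing A] (S : Submonoid A) (hA : IsStronglyISPRing A) :
    IsStronglyISPRing (Localization S) := by
  classical
  intro I hI
  set f := algebraMap A (Localization S) with hf
  set I' : Ideal A := I.comap f with hI'def
  have hI'top : I' ≠ ⊤ := by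
    intro h
    apply hI
    rw [← IsLocalization.map_comap S (Localization S) I]
    change Ideal.map f I' = ⊤
    rw [h, Ideal.map_top]
  obtain ⟨J, L, hJ, hLne, hLmem, hfac⟩ := hA I' hI'top
  set Lm : List (Ideal (Localization S)) := L.map (Ideal.map f) with hLm
  set L' := Lm.filter (fun H => !decide (H = ⊤)) with hL'
  by_cases hdeg : L' = []
  · exfalso
    have hall : ∀ H ∈ L, ∃ s ∈ S, s ∈ H := by
      intro H hH
      have htop : Ideal.map f H = ⊤ := by
        by_contra hne
        have hmem : Ideal.map f H ∈ L' := by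
          rw [hL']
          exact List.mem_filter.2 ⟨List.mem_map_of_mem hH, by simpa using hne⟩
        rw [hdeg] at hmem
        exact List.not_mem_nil hmem
      exact myISP.exists_mem_of_map_eq_top S htop
    obtain ⟨s, hsS, hsP⟩ := myISP.exists_mem_prod S L hall
    have hJI' : J ≤ I' := by
      intro j hj
      have hji : j * s ∈ I' := hfac ▸ Ideal.mul_mem_mul hj hsP
      have hmem : f j * f s ∈ I := by
        rw [← map_mul]; exact hji
      have hu : IsUnit (f s) := IsLocalization.map_units (Localization S) ⟨s, hsS⟩
      obtain ⟨v, hv⟩ := hu.exists_right_inv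
      have := I.mul_mem_right v hmem
      rw [mul_assoc, hv, mul_one] at this
      exact this
    have hJeq : J = I' := le_antisymm hJI' (hfac ▸ Ideal.mul_le_left)
    have hcan : J = J * L.prod := hJeq.trans hfac
    have htop := myISP.cancel hJ hcan
    obtain ⟨H, t, rfl⟩ := List.exists_cons_of_ne_nil hLne
    have hle : (H :: t).prod ≤ H := by
      rw [List.prod_cons]
      exact Ideal.mul_le_left
    exact (hLmem H List.mem_cons_self).1 (top_le_iff.1 (htop ▸ hle))
  · refine ⟨J.map f, L', ?_, hdeg, ?_, ?_⟩
    · obtain ⟨⟨a, haJ, hareg⟩, hfg, hloc⟩ := hJ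
      refine ⟨⟨f a, Ideal.mem_map_of_mem f haJ, myISP.map_nzd S hareg⟩, hfg.map _, ?_⟩
      intro M' hM'
      haveI := hM'.isPrime
      rw [Ideal.map_map]
      obtain ⟨N, hN, hMN⟩ := Ideal.exists_le_maximal (M'.comap f) (Ideal.comap_ne_top f hM'.ne_top)
      refine myISP.lift_principal _ N hN ?_ J (hloc N hN)
      rintro ⟨a, haN⟩
      have : f a ∈ M'.primeCompl := fun hmem => haN (hMN (Ideal.mem_comap.2 hmem))
      exact IsLocalization.map_units (Localization.AtPrime M') ⟨f a, this⟩
    · intro H hH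
      rw [hL'] at hH
      have hmem := List.mem_filter.1 hH
      obtain ⟨K, hKL, rfl⟩ := List.mem_map.1 hmem.1
      exact ⟨by simpa using hmem.2, myISP.map_radical_loc S (hLmem K hKL).2⟩
    · have hIm : I = Ideal.map f I' := (IsLocalization.map_comap S _ I).symm
      rw [hIm, hfac, Ideal.map_mul, myISP.map_prod_list]
      congr 1
      rw [hL']
      exact (myISP.prod_filter_ne_top Lm).symm

end LocHelpers

section QuotHelpers

variable {R : Type*} [CommRing R]

theorem myISP.list_prod_le_of_mem {l : List (Ideal R)} {H : Ideal R} (h : H ∈ l) :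
    l.prod ≤ H := by
  induction l with
  | nil => exact absurd h List.not_mem_nil
  | cons a t ih =>
    rw [List.prod_cons]
    rcases List.mem_cons.1 h with rfl | hmem
    · exact Ideal.mul_le_left
    · exact le_trans Ideal.mul_le_right (ih hmem)

theorem myISP.part1 {A : Type*} [CommRing A] (hA : IsStronglyISPRing A)
    (P : Ideal A) (hP : P.IsPrime) : IsISPDomain (A ⧸ P) := by
  haveI := hP
  refine ⟨inferInstance, ?_⟩
  intro I hItop hIbot
  set mk := Ideal.Quotient.mk P with hmk
  have hsurj : Function.Surjective mk := Ideal.Quotient.mk_surjective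
  set I' : Ideal A := I.comap mk with hI'def
  have hmapcomap : Ideal.map mk I' = I := Ideal.map_comap_of_surjective mk hsurj I
  have hI'top : I' ≠ ⊤ := fun h => hItop (by rw [← hmapcomap, h, Ideal.map_top])
  obtain ⟨J, L, hJ, hLne, hLmem, hfac⟩ := hA I' hI'top
  have hPI' : P ≤ I' := fun x hx => Ideal.mem_comap.2
    (by rw [hmk, Ideal.Quotient.eq_zero_iff_mem.2 hx]; exact I.zero_mem)
  have hker : RingHom.ker mk ≤ I' := by
    rw [hmk, Ideal.mk_ker]; exact hPI'
  have hJker : RingHom.ker mk ≤ J := le_trans hker (hfac ▸ Ideal.mul_le_left)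
  have hJP : ¬J ≤ P := by
    intro h
    apply hIbot
    have hI'P : I' = P := le_antisymm (hfac ▸ le_trans Ideal.mul_le_left h) hPI'
    rw [← hmapcomap, hI'P, hmk, Ideal.map_quotient_self]
  obtain ⟨a, haJ, haP⟩ := SetLike.not_le_iff_exists.1 hJP
  refine ⟨J.map mk, L.map (Ideal.map mk), ?_, by simpa using hLne, ?_, ?_⟩
  · refine ⟨⟨mk a, Ideal.mem_map_of_mem mk haJ, mem_nonZeroDivisors_of_ne_zero ?_⟩,
      hJ.2.1.map _, ?_⟩
    · rw [hmk, Ne, Ideal.Quotient.eq_zero_iff_mem]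
      exact haP
    · intro M' hM'
      haveI := hM'
      haveI := hM'.isPrime
      rw [Ideal.map_map]
      have hN : (M'.comap mk).IsMaximal := Ideal.comap_isMaximal_of_surjective mk hsurj
      refine myISP.lift_principal _ _ hN ?_ J (hJ.2.2 _ hN)
      rintro ⟨b, hbN⟩
      have hmem : mk b ∈ M'.primeCompl := fun hmem => hbN (Ideal.mem_comap.2 hmem)
      exact IsLocalization.map_units (Localization.AtPrime M') ⟨mk b, hmem⟩
  · intro H hH
    obtain ⟨K, hKL, rfl⟩ := List.mem_map.1 hH
    have h2 : J * L.prod ≤ K := le_trans Ideal.mul_le_right (myISP.list_prod_le_of_mem hKL)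
    have hKker : RingHom.ker mk ≤ K := le_trans hker (hfac ▸ h2)
    exact ⟨myISP.map_ne_top_surj hsurj hKker (hLmem K hKL).1,
      myISP.map_radical_surj hsurj hKker (hLmem K hKL).2⟩
  · rw [← hmapcomap, hfac, Ideal.map_mul, myISP.map_prod_list]

end QuotHelpers


section PiHelpers

variable {n : ℕ} {B : Fin n → Type*} [∀ i, CommRing (B i)]

namespace myISP

theorem single_one_mul (i : Fin n) (g : ∀ j, B j) :
    Pi.single i 1 * g = Pi.single i (g i) := by
  funext j
  rcases eq_or_ne j i with rfl | hj
  · simp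
  · simp [Pi.single_eq_of_ne hj]

theorem mul_single_one (i : Fin n) (g : ∀ j, B j) :
    g * Pi.single i 1 = Pi.single i (g i) := by
  rw [mul_comm, single_one_mul]

theorem single_mul_single_ne {i j : Fin n} (h : j ≠ i) (x : B j) (y : B i) :
    Pi.single j x * Pi.single i y = 0 := by
  funext k
  rw [Pi.mul_apply, Pi.zero_apply]
  rcases eq_or_ne k j with rfl | hk
  · rw [Pi.single_eq_of_ne h, mul_zero]
  · rw [Pi.single_eq_of_ne hk, zero_mul]

/-- the product ideal of a family of ideals, as a `MonoidHom`. -/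
def idealPi : ((i : Fin n) → Ideal (B i)) →* Ideal (∀ i, B i) where
  toFun X := ⨅ i, (X i).comap (Pi.evalRingHom B i)
  map_one' := by
    simp only [Ideal.one_eq_top]
    apply eq_top_iff.2
    intro f _
    simp [Submodule.mem_iInf, Ideal.mem_comap]
  map_mul' X Y := by
    apply le_antisymm
    · intro f hf
      rw [Submodule.mem_iInf] at hf
      classical
      have hf' : ∀ i, f i ∈ X i * Y i := fun i => by
        simpa [Ideal.mem_comap] using hf i
      rw [← Finset.univ_sum_single f]
      apply Ideal.sum_mem
      intro i _
      refine Submodule.mul_induction_on (hf' i) ?_ ?_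
      · intro x hx y hy
        rw [Pi.single_mul]
        refine Ideal.mul_mem_mul ?_ ?_
        · rw [Submodule.mem_iInf]
          intro j
          rcases eq_or_ne j i with rfl | hj
          · simpa [Ideal.mem_comap] using hx
          · simp [Ideal.mem_comap, Pi.single_eq_of_ne hj]
        · rw [Submodule.mem_iInf]
          intro j
          rcases eq_or_ne j i with rfl | hj
          · simpa [Ideal.mem_comap] using hy
          · simp [Ideal.mem_comap, Pi.single_eq_of_ne hj]
      · intro x y hx hy
        rw [Pi.single_add]
        exact Ideal.add_mem _ hx hy
    · apply Ideal.mul_le.2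
      intro f hf g hg
      rw [Submodule.mem_iInf] at hf hg ⊢
      intro i
      rw [Ideal.mem_comap] at *
      exact Ideal.mul_mem_mul (by simpa using hf i) (by simpa using hg i)

theorem mem_idealPi {X : (i : Fin n) → Ideal (B i)} {f : ∀ i, B i} :
    f ∈ idealPi X ↔ ∀ i, f i ∈ X i := by
  simp [idealPi, Submodule.mem_iInf, Ideal.mem_comap]

theorem idealPi_eq_top_iff {X : (i : Fin n) → Ideal (B i)} :
    idealPi X = ⊤ ↔ ∀ i, X i = ⊤ := by
  constructor
  · intro h i
    rw [Ideal.eq_top_iff_one] at h ⊢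
    exact mem_idealPi.1 h i
  · intro h
    rw [Ideal.eq_top_iff_one, mem_idealPi]
    intro i
    rw [h i]
    trivial

theorem idealPi_radical {X : (i : Fin n) → Ideal (B i)} (h : ∀ i, (X i).IsRadical) :
    (idealPi X).IsRadical := by
  intro f hf
  obtain ⟨k, hk⟩ := hf
  rw [mem_idealPi]
  intro i
  exact h i ⟨k, by simpa using mem_idealPi.1 hk i⟩

theorem surjective_eval (i : Fin n) : Function.Surjective (Pi.evalRingHom B i) :=
  fun y => ⟨Pi.single i y, Pi.single_eq_same i y⟩

theorem eq_idealPi (I : Ideal (∀ i, B i)) :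
    I = idealPi (fun i => I.map (Pi.evalRingHom B i)) := by
  apply le_antisymm
  · intro f hf
    rw [mem_idealPi]
    exact fun i => Ideal.mem_map_of_mem _ hf
  · intro f hf
    rw [mem_idealPi] at hf
    have : ∀ i, ∃ g ∈ I, g i = f i := by
      intro i
      obtain ⟨g, hg, hgi⟩ := (Ideal.mem_map_iff_of_surjective _ (surjective_eval i)).1 (hf i)
      exact ⟨g, hg, hgi⟩
    choose g hgI hgf using this
    rw [← Finset.univ_sum_single f]
    apply Ideal.sum_mem
    intro i _
    rw [← hgf i, ← single_one_mul]
    exact I.mul_mem_left _ (hgI i)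

theorem map_eval_idealPi (X : (i : Fin n) → Ideal (B i)) (i : Fin n) :
    (idealPi X).map (Pi.evalRingHom B i) = X i := by
  apply le_antisymm
  · rw [Ideal.map_le_iff_le_comap]
    intro f hf
    exact Ideal.mem_comap.2 (mem_idealPi.1 hf i)
  · intro x hx
    have : Pi.single i x ∈ idealPi X := by
      rw [mem_idealPi]
      intro j
      rcases eq_or_ne j i with rfl | hj
      · simpa using hx
      · simp [Pi.single_eq_of_ne hj]
    simpa using Ideal.mem_map_of_mem (Pi.evalRingHom B i) this

theorem idealPi_fg {X : (i : Fin n) → Ideal (B i)} (h : ∀ i, (X i).FG) :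
    (idealPi X).FG := by
  choose G hG using h
  classical
  refine Submodule.fg_def.2 ⟨⋃ i, Pi.single i '' (G i : Set (B i)), ?_, ?_⟩
  · exact Set.finite_iUnion (fun i => ((G i).finite_toSet.image _))
  · apply le_antisymm
    · apply Submodule.span_le.2
      rintro f ⟨s, ⟨i, rfl⟩, ⟨x, hx, rfl⟩⟩
      rw [SetLike.mem_coe, mem_idealPi]
      intro j
      rcases eq_or_ne j i with rfl | hj
      · rw [Pi.single_eq_same]
        rw [← hG j]
        exact Ideal.subset_span hx
      · simp [Pi.single_eq_of_ne hj]
    · intro f hf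
      rw [mem_idealPi] at hf
      rw [← Finset.univ_sum_single f]
      apply Ideal.sum_mem
      intro i _
      have hfi : f i ∈ Ideal.span (G i : Set (B i)) := by rw [hG i]; exact hf i
      refine Submodule.span_induction ?_ ?_ ?_ ?_ hfi
      · intro x hx
        exact Ideal.subset_span (Set.mem_iUnion.2 ⟨i, Set.mem_image_of_mem _ hx⟩)
      · simp
      · intro x y _ _ hx hy
        rw [Pi.single_add]
        exact Ideal.add_mem _ hx hy
      · intro c x _ hx
        rw [smul_eq_mul, Pi.single_mul]
        exact Ideal.mul_mem_left _ _ hx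

theorem top_invertible {R : Type*} [CommRing R] : (⊤ : Ideal R).IsInvertibleIdeal := by
  refine ⟨⟨1, trivial, one_mem (nonZeroDivisors R)⟩, ⟨{1}, by simp⟩, ?_⟩
  intro M hM
  haveI := hM.isPrime
  rw [Ideal.map_top]
  exact ⟨1, by simp [Ideal.submodule_span_eq, Ideal.span_singleton_one]⟩

/-- data for a maximal ideal of a finite product ring -/
theorem exists_eval_maximal (M' : Ideal (∀ i, B i)) (hM' : M'.IsMaximal) :
    ∃ i : Fin n, Pi.single i 1 ∉ M' ∧ (∀ f : ∀ j, B j, f i = 0 → f ∈ M') ∧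
      (M'.map (Pi.evalRingHom B i)).IsMaximal ∧
      M' = (M'.map (Pi.evalRingHom B i)).comap (Pi.evalRingHom B i) := by
  haveI := hM'.isPrime
  have hex : ∃ i : Fin n, Pi.single i 1 ∉ M' := by
    by_contra hc
    push_neg at hc
    apply hM'.ne_top
    rw [Ideal.eq_top_iff_one]
    have : (1 : ∀ i, B i) = ∑ i, Pi.single i 1 := by
      have := Finset.univ_sum_single (1 : ∀ i, B i)
      simpa using this.symm
    rw [this]
    exact Ideal.sum_mem _ (fun i _ => hc i)
  obtain ⟨i, hi⟩ := hex
  have hsub : ∀ j, j ≠ i → Pi.single j (1 : B j) ∈ M' := by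
    intro j hj
    have hz : Pi.single j (1 : B j) * Pi.single i (1 : B i) ∈ M' := by
      rw [single_mul_single_ne hj]
      exact M'.zero_mem
    rcases hM'.isPrime.mem_or_mem hz with h | h
    · exact h
    · exact absurd h hi
  have hone : (1 : ∀ i, B i) - Pi.single i 1 ∈ M' := by
    have hs := Finset.add_sum_erase Finset.univ (fun j => (Pi.single j 1 : ∀ k, B k))
      (Finset.mem_univ i)
    have huniv : (1 : ∀ i, B i) = ∑ j, Pi.single j 1 := by
      have := Finset.univ_sum_single (1 : ∀ i, B i)
      simpa using this.symm
    have : (1 : ∀ i, B i) - Pi.single i 1 =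
        ∑ j ∈ Finset.univ.erase i, Pi.single j 1 := by
      rw [huniv, ← hs]
      ring
    rw [this]
    exact Ideal.sum_mem _ (fun j hj => hsub j (Finset.ne_of_mem_erase hj))
  have hker : ∀ f : ∀ j, B j, f i = 0 → f ∈ M' := by
    intro f hf
    have h1 : f * ((1 : ∀ i, B i) - Pi.single i 1) ∈ M' := M'.mul_mem_left f hone
    have h2 : f * ((1 : ∀ i, B i) - Pi.single i 1) = f := by
      rw [mul_sub, mul_one, mul_single_one, hf, Pi.single_zero, sub_zero]
    rwa [h2] at h1
  set M := M'.map (Pi.evalRingHom B i) with hM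
  have hcomap : M.comap (Pi.evalRingHom B i) = M' := by
    apply le_antisymm
    · intro f hf
      rw [Ideal.mem_comap] at hf
      obtain ⟨g, hg, hgf⟩ := (Ideal.mem_map_iff_of_surjective _ (surjective_eval i)).1 hf
      have : (f - g) i = 0 := by
        rw [Pi.sub_apply, sub_eq_zero]
        exact hgf.symm
      have hfg : f - g ∈ M' := hker _ this
      simpa using M'.add_mem hfg hg
    · intro f hf
      exact Ideal.mem_comap.2 (Ideal.mem_map_of_mem _ hf)
  have hMtop : M ≠ ⊤ := by
    intro h
    apply hM'.ne_top
    rw [← hcomap, h, Ideal.comap_top]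
  refine ⟨i, hi, hker, ?_, hcomap.symm⟩
  rw [Ideal.isMaximal_def]
  constructor
  · exact hMtop
  · intro K hK
    have hle1 : M' ≤ K.comap (Pi.evalRingHom B i) := by
      rw [← hcomap]
      exact Ideal.comap_mono hK.le
    have hne1 : M' ≠ K.comap (Pi.evalRingHom B i) := by
      intro he
      have hKM : K = M := by
        rw [← Ideal.map_comap_of_surjective _ (surjective_eval i) K, ← he]
      rw [hKM] at hK
      exact lt_irrefl M hK
    have := hM'.1.2 _ (lt_of_le_of_ne hle1 hne1)
    rw [Ideal.eq_top_iff_one] at this ⊢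
    simpa using this

theorem single_mul_left (i : Fin n) (x : B i) (g : ∀ j, B j) :
    Pi.single i x * g = Pi.single i (x * g i) := by
  funext k
  rcases eq_or_ne k i with rfl | hk
  · simp
  · simp [Pi.single_eq_of_ne hk]

theorem prod_map_idealPi_update (i : Fin n) (l : List (Ideal (B i))) :
    (l.map (fun H => idealPi (Function.update (fun j => (⊤ : Ideal (B j))) i H))).prod
      = idealPi (Function.update (fun j => (⊤ : Ideal (B j))) i l.prod) := by
  induction l with
  | nil =>
    rw [List.map_nil, List.prod_nil, List.prod_nil]
    have h1 : (1 : Ideal (∀ j, B j)) = ⊤ := Ideal.one_eq_top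
    rw [h1]
    symm
    rw [idealPi_eq_top_iff]
    intro j
    rcases eq_or_ne j i with rfl | hj
    · rw [Function.update_self]
      exact Ideal.one_eq_top
    · rw [Function.update_of_ne hj]
  | cons h t ih =>
    rw [List.map_cons, List.prod_cons, List.prod_cons, ih, ← map_mul idealPi]
    congr 1
    funext j
    rcases eq_or_ne j i with rfl | hj
    · simp [Function.update_self]
    · simp only [Pi.mul_apply, Function.update_of_ne hj]
      exact Ideal.mul_top ⊤

theorem part3fwd (hA : IsStronglyISPRing (∀ i, B i)) (i : Fin n) :
    IsStronglyISPRing (B i) := by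
  intro I hItop
  set ev := Pi.evalRingHom B i with hev
  have hsurj : Function.Surjective ev := surjective_eval i
  set I' : Ideal (∀ j, B j) := I.comap ev with hI'def
  have hmapcomap : I'.map ev = I := Ideal.map_comap_of_surjective ev hsurj I
  have hI'top : I' ≠ ⊤ := fun h => hItop (by rw [← hmapcomap, h, Ideal.map_top])
  obtain ⟨J, L, hJ, hLne, hLmem, hfac⟩ := hA I' hI'top
  have hker : RingHom.ker ev ≤ I' := by
    intro f hf
    rw [RingHom.mem_ker] at hf
    rw [hI'def, Ideal.mem_comap, hf]
    exact I.zero_mem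
  refine ⟨J.map ev, L.map (Ideal.map ev), ?_, by simpa using hLne, ?_, ?_⟩
  · obtain ⟨⟨a, haJ, hareg⟩, hfg, hloc⟩ := hJ
    refine ⟨⟨ev a, Ideal.mem_map_of_mem ev haJ, ?_⟩, hfg.map _, ?_⟩
    · rw [mem_nonZeroDivisors_iff_right]
      intro z hz
      have h1 : Pi.single i z * a = 0 := by
        rw [single_mul_left]
        have h2 : z * a i = 0 := hz
        rw [h2, Pi.single_zero]
      have h2 := mem_nonZeroDivisors_iff_right.1 hareg _ h1
      have h3 := congrFun h2 i
      simpa using h3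
    · intro M hM
      haveI := hM
      haveI := hM.isPrime
      rw [Ideal.map_map]
      have hN : (M.comap ev).IsMaximal := Ideal.comap_isMaximal_of_surjective ev hsurj
      refine lift_principal _ _ hN ?_ J (hloc _ hN)
      rintro ⟨f, hfN⟩
      have hmem : ev f ∈ M.primeCompl := fun hmem => hfN (Ideal.mem_comap.2 hmem)
      exact IsLocalization.map_units (Localization.AtPrime M) ⟨ev f, hmem⟩
  · intro H hH
    obtain ⟨K, hKL, rfl⟩ := List.mem_map.1 hH
    have h2 : J * L.prod ≤ K := le_trans Ideal.mul_le_right (list_prod_le_of_mem hKL)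
    have hKker : RingHom.ker ev ≤ K := le_trans hker (hfac ▸ h2)
    exact ⟨map_ne_top_surj hsurj hKker (hLmem K hKL).1,
      map_radical_surj hsurj hKker (hLmem K hKL).2⟩
  · rw [← hmapcomap, hfac, Ideal.map_mul, map_prod_list]

theorem part3rev (hB : ∀ i, IsStronglyISPRing (B i)) : IsStronglyISPRing (∀ i, B i) := by
  classical
  intro I hItop
  set Xi : (i : Fin n) → Ideal (B i) := fun i => I.map (Pi.evalRingHom B i) with hXi
  have hIeq : I = idealPi Xi := eq_idealPi I
  have hch : ∀ i, ∃ (J : Ideal (B i)) (L : List (Ideal (B i))),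
      (J.IsInvertibleIdeal ∧ (∀ H ∈ L, H ≠ ⊤ ∧ H.IsRadical) ∧ Xi i = J * L.prod)
        ∧ (Xi i ≠ ⊤ → L ≠ []) := by
    intro i
    by_cases hx : Xi i = ⊤
    · refine ⟨⊤, [], ⟨top_invertible, by simp, ?_⟩, fun h => absurd hx h⟩
      rw [hx, List.prod_nil, mul_one]
    · obtain ⟨J, L, hJ, hLne, hmem, heq⟩ := hB i (Xi i) hx
      exact ⟨J, L, ⟨hJ, hmem, heq⟩, fun _ => hLne⟩
  choose Jf Lf hmain hne using hch
  have hex : ∃ i0, Xi i0 ≠ ⊤ := by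
    by_contra hc
    push_neg at hc
    exact hItop (hIeq.trans (idealPi_eq_top_iff.2 hc))
  obtain ⟨i0, hi0⟩ := hex
  set ll : List (Ideal (∀ j, B j)) :=
    (List.ofFn (fun i => (Lf i).map
      (fun H => idealPi (Function.update (fun j => (⊤ : Ideal (B j))) i H)))).flatten with hll
  refine ⟨idealPi Jf, ll, ⟨?_, idealPi_fg (fun i => (hmain i).1.2.1), ?_⟩, ?_, ?_, ?_⟩
  · have hreg : ∀ i, ∃ a ∈ Jf i, a ∈ nonZeroDivisors (B i) := fun i => (hmain i).1.1
    choose a haJ hregel using hreg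
    refine ⟨a, mem_idealPi.2 haJ, ?_⟩
    rw [mem_nonZeroDivisors_iff_right]
    intro z hz
    funext i
    have h1 : z i * a i = 0 := congrFun hz i
    exact mem_nonZeroDivisors_iff_right.1 (hregel i) _ h1
  · intro M' hM'
    haveI := hM'
    haveI := hM'.isPrime
    obtain ⟨i, hi, hker, hMmax, hcomap⟩ := exists_eval_maximal M' hM'
    set D := Localization.AtPrime M' with hD
    have halge : algebraMap (∀ j, B j) D (Pi.single i 1) = 1 := by
      have hunit : IsUnit (algebraMap (∀ j, B j) D (Pi.single i 1)) :=
        IsLocalization.map_units (M := M'.primeCompl) D ⟨Pi.single i 1, hi⟩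
      have hidem : algebraMap (∀ j, B j) D (Pi.single i 1) *
          algebraMap (∀ j, B j) D (Pi.single i 1) = algebraMap (∀ j, B j) D (Pi.single i 1) := by
        rw [← map_mul]
        congr 1
        rw [single_one_mul, Pi.single_eq_same]
      exact hunit.mul_left_cancel (by rw [mul_one]; exact hidem)
    have hψmul : ∀ x y : B i, algebraMap _ D (Pi.single i (x * y)) =
        algebraMap _ D (Pi.single i x) * algebraMap _ D (Pi.single i y) := by
      intro x y
      rw [Pi.single_mul, map_mul]
    have hψzero : algebraMap _ D (Pi.single i (0 : B i)) = 0 := by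
      rw [Pi.single_zero, map_zero]
    have hψadd : ∀ x y : B i, algebraMap _ D (Pi.single i (x + y)) =
        algebraMap _ D (Pi.single i x) + algebraMap _ D (Pi.single i y) := by
      intro x y
      rw [Pi.single_add, map_add]
    set ψ : B i →+* D :=
      { toFun := fun x => algebraMap _ D (Pi.single i x)
        map_one' := halge
        map_mul' := hψmul
        map_zero' := hψzero
        map_add' := hψadd } with hψ
    have hcompeq : (algebraMap (∀ j, B j) D) = ψ.comp (Pi.evalRingHom B i) := by
      refine RingHom.ext fun f => ?_
      show algebraMap _ D f = algebraMap _ D (Pi.single i (f i))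
      have h0 : algebraMap _ D (f * (1 - Pi.single i 1)) = 0 := by
        rw [map_mul, map_sub, map_one, halge, sub_self, mul_zero]
      have h1 : f = Pi.single i (f i) + f * (1 - Pi.single i 1) := by
        rw [mul_sub, mul_one, mul_single_one]
        ring
      conv_lhs => rw [h1]
      rw [map_add, h0, add_zero]
    rw [hcompeq, ← Ideal.map_map, map_eval_idealPi]
    refine lift_principal ψ _ hMmax ?_ (Jf i) ((hmain i).1.2.2 _ hMmax)
    rintro ⟨x, hxM⟩
    have hsing : Pi.single i x ∉ M' := by
      intro hmem
      exact hxM (by simpa using Ideal.mem_map_of_mem (Pi.evalRingHom B i) hmem)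
    exact IsLocalization.map_units (M := M'.primeCompl) D ⟨Pi.single i x, hsing⟩
  · have hLf : Lf i0 ≠ [] := hne i0 hi0
    obtain ⟨H, hH⟩ := List.exists_mem_of_ne_nil _ hLf
    apply List.ne_nil_of_mem
      (a := idealPi (Function.update (fun j => (⊤ : Ideal (B j))) i0 H))
    rw [hll]
    apply List.mem_flatten.2
    refine ⟨(Lf i0).map (fun H => idealPi (Function.update (fun j => (⊤ : Ideal (B j))) i0 H)),
      ?_, List.mem_map_of_mem hH⟩
    exact List.mem_ofFn.2 ⟨i0, rfl⟩
  · intro H' hH'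
    rw [hll] at hH'
    obtain ⟨l, hl, hH'l⟩ := List.mem_flatten.1 hH'
    obtain ⟨i, hi⟩ := List.mem_ofFn.1 hl
    subst hi
    obtain ⟨H, hHL, rfl⟩ := List.mem_map.1 hH'l
    constructor
    · rw [Ne, idealPi_eq_top_iff]
      push_neg
      refine ⟨i, ?_⟩
      rw [Function.update_self]
      exact ((hmain i).2.1 H hHL).1
    · apply idealPi_radical
      intro j
      rcases eq_or_ne j i with rfl | hj
      · rw [Function.update_self]
        exact ((hmain j).2.1 H hHL).2
      · rw [Function.update_of_ne hj]
        intro x _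
        trivial
  · have hprodll : ll.prod = idealPi (fun i => (Lf i).prod) := by
      rw [hll, List.prod_flatten, List.map_ofFn, List.prod_ofFn]
      have hstep : ∀ i : Fin n,
          (List.prod ∘ fun i => (Lf i).map
            (fun H => idealPi (Function.update (fun j => (⊤ : Ideal (B j))) i H))) i
          = idealPi (Function.update (fun j => (⊤ : Ideal (B j))) i (Lf i).prod) :=
        fun i => prod_map_idealPi_update i (Lf i)
      rw [Finset.prod_congr rfl (fun i _ => hstep i),
        ← map_prod (idealPi (B := B)) (fun i => Function.update (fun j => (⊤ : Ideal (B j))) i (Lf i).prod) Finset.univ]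
      congr 1
      funext j
      rw [Finset.prod_apply]
      rw [Finset.prod_eq_single j (fun i _ hij =>
        by rw [Function.update_of_ne (Ne.symm hij)]; exact Ideal.one_eq_top.symm)
        (fun h => absurd (Finset.mem_univ j) h)]
      exact Function.update_self j _ _
    rw [hIeq, hprodll, ← map_mul (idealPi (B := B))]
    exact congrArg idealPi (funext fun i => (hmain i).2.2)

end myISP
end PiHelpers

/-- (1) A quotient of a strongly ISP-ring by a prime ideal is an ISP-domain.
(2) A localization of a strongly ISP-ring is a strongly ISP-ring.
(3) A finite direct product is a strongly ISP-ring iff each factor is. -/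
theorem stronglyISPRing_stability {A : Type*} [CommRing A] (S : Submonoid A)
    {n : ℕ} (B : Fin n → Type*) [∀ i, CommRing (B i)] :
    (IsStronglyISPRing A → ∀ P : Ideal A, P.IsPrime → IsISPDomain (A ⧸ P)) ∧
      (IsStronglyISPRing A → IsStronglyISPRing (Localization S)) ∧
      (IsStronglyISPRing (∀ i, B i) ↔ ∀ i, IsStronglyISPRing (B i)) :=
  ⟨fun hA P hP => myISP.part1 hA P hP, fun hA => myISP.part2 S hA,
    ⟨fun h i => myISP.part3fwd h i, fun h => myISP.part3rev h⟩⟩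
end

section
/- Let A be a local zero-dimensional strongly ISP-ring with maximal ideal M (so M is the unique prime ideal of A). Then A is a special primary ring: every proper ideal of A is a power of M. -/
/-- A local zero-dimensional strongly ISP-ring (its maximal ideal being its unique prime
ideal) is special primary: every proper ideal is a power of the maximal ideal. -/
theorem special_primary_of_local_zero_dimensional_stronglyISPRing {A : Type*} [CommRing A]
    [IsLocalRing A]
    (hzd : ∀ P : Ideal A, P.IsPrime → P = IsLocalRing.maximalIdeal A)
    (hisp : IsStronglyISPRing A) :
    ∀ I : Ideal A, I ≠ ⊤ → ∃ n : ℕ, I = (IsLocalRing.maximalIdeal A) ^ n := by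
  intro I hI
  have hM : (IsLocalRing.maximalIdeal A : Ideal A) = nilradical A := by
    rw [nilradical_eq_sInf]
    apply le_antisymm
    · apply le_sInf
      intro P hP
      rw [hzd P hP]
    · exact sInf_le (IsLocalRing.maximalIdeal.isMaximal A).isPrime
  obtain ⟨J, L, ⟨⟨a, haJ, hreg⟩, _, _⟩, hLne, hH, hprod⟩ := hisp I hI
  have haM : a ∉ IsLocalRing.maximalIdeal A := by
    intro h
    rw [hM, mem_nilradical] at h
    obtain ⟨n, hn⟩ := h
    have h2 := pow_mem hreg n
    rw [hn] at h2
    exact zero_notMem_nonZeroDivisors h2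
  have hJtop : J = ⊤ := by
    by_contra h
    exact haM (IsLocalRing.le_maximalIdeal h haJ)
  have hHeq : ∀ H ∈ L, H = IsLocalRing.maximalIdeal A := by
    intro H hHL
    obtain ⟨hne, hrad⟩ := hH H hHL
    refine le_antisymm (IsLocalRing.le_maximalIdeal hne) ?_
    rw [hM]
    calc nilradical A = (⊥ : Ideal A).radical := rfl
      _ ≤ H.radical := Ideal.radical_mono bot_le
      _ = H := hrad.radical
  rw [hprod, hJtop, List.prod_eq_pow_card L (IsLocalRing.maximalIdeal A) hHeq, Ideal.top_mul]
  exact ⟨L.length, rfl⟩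
end

section
/- Let A be a strongly ISP-ring in which every nonzero prime ideal is maximal. Then A is an almost multiplication ring: for every prime ideal P of A, the localization A_P is either a discrete rank one valuation domain or a special primary ring. -/
/-- A special primary ring: it has a unique prime ideal `M` and every proper ideal is a
power of `M`. -/
def IsSpecialPrimary (A : Type*) [CommRing A] : Prop :=
  ∃ M : Ideal A, M.IsPrime ∧ (∀ P : Ideal A, P.IsPrime → P = M) ∧
    ∀ I : Ideal A, I ≠ ⊤ → ∃ n : ℕ, I = M ^ n


section Helpers

variable {A : Type*} [CommRing A]

lemma list_prod_le_of_mem {L : List (Ideal A)} {H : Ideal A} (h : H ∈ L) : L.prod ≤ H := by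
  induction L with
  | nil => cases h
  | cons K T ih =>
    rw [List.prod_cons]
    rcases List.mem_cons.1 h with rfl | h
    · exact Ideal.mul_le_left
    · exact le_trans Ideal.mul_le_right (ih h)

lemma map_list_prod_eq_pow {B : Type*} [CommRing B] (f : A →+* B) {L : List (Ideal A)}
    {P : Ideal A} (h : ∀ H ∈ L, H = P) :
    Ideal.map f L.prod = (Ideal.map f P) ^ L.length := by
  induction L with
  | nil => simp [Ideal.map_top]
  | cons K T ih =>
    rw [List.prod_cons, Ideal.map_mul, h K List.mem_cons_self,
      ih (fun H hH => h H (List.mem_cons_of_mem _ hH)), List.length_cons, pow_succ, mul_comm]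

lemma algebraMap_mem_nonZeroDivisors_localization (S : Submonoid A) {a : A}
    (ha : a ∈ nonZeroDivisors A) :
    algebraMap A (Localization S) a ∈ nonZeroDivisors (Localization S) := by
  rw [mem_nonZeroDivisors_iff_right]
  intro z hz
  obtain ⟨b, s, rfl⟩ := IsLocalization.mk'_surjective S z
  rw [IsLocalization.mk'_eq_zero_iff]
  rw [← IsLocalization.mk'_one (M := S) (Localization S) a, ← IsLocalization.mk'_mul,
    IsLocalization.mk'_eq_zero_iff] at hz
  obtain ⟨t, ht⟩ := hz
  refine ⟨t, mem_nonZeroDivisors_iff_right.1 ha _ ?_⟩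
  rw [mul_assoc]
  exact ht

lemma span_singleton_cancel {B : Type*} [CommRing B] [IsDomain B] {x : B} (hx : x ≠ 0)
    {I J : Ideal B} (h : Ideal.span {x} * I = Ideal.span {x} * J) : I = J := by
  have key : ∀ {I J : Ideal B}, Ideal.span {x} * I = Ideal.span {x} * J → I ≤ J := by
    intro I J h a ha
    have hmem : x * a ∈ Ideal.span {x} * J :=
      h ▸ Ideal.mul_mem_mul (Ideal.mem_span_singleton_self x) ha
    obtain ⟨b, hb, hba⟩ := Ideal.mem_span_singleton_mul.1 hmem
    rwa [← mul_left_cancel₀ hx hba]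
  exact le_antisymm (key h) (key h.symm)

end Helpers

/-- A strongly ISP-ring in which every nonzero prime ideal is maximal is an almost
multiplication ring: every localization at a prime is a discrete rank one valuation
domain or a special primary ring. -/
theorem almost_multiplication_of_stronglyISPRing {A : Type*} [CommRing A]
    (hisp : IsStronglyISPRing A)
    (hdim : ∀ P : Ideal A, P.IsPrime → P ≠ ⊥ → P.IsMaximal) :
    ∀ (P : Ideal A) (hP : P.IsPrime),
      (∃ hd : IsDomain (Localization (@Ideal.primeCompl A _ P hP)),
          @IsDiscreteValuationRing (Localization (@Ideal.primeCompl A _ P hP)) _ hd) ∨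
        IsSpecialPrimary (Localization (@Ideal.primeCompl A _ P hP)) := by
  intro P hP
  haveI := hP
  set B := Localization.AtPrime P with hBdef
  set f := algebraMap A B with hfdef
  set m := IsLocalRing.maximalIdeal B with hmdef
  have hmtop : m ≠ ⊤ := (IsLocalRing.maximalIdeal.isMaximal B).ne_top
  have hcm : Ideal.comap f m = P := Localization.AtPrime.comap_maximalIdeal
  have hmap : Ideal.map f P = m := Localization.AtPrime.map_eq_maximalIdeal
  by_cases hbot : m = ⊥
  · -- `B` is a field: special primary with unique prime `⊥`.
    right
    refine ⟨⊥, ?_, ?_, ?_⟩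
    · rw [← hbot]; exact (IsLocalRing.maximalIdeal.isMaximal B).isPrime
    · intro Q hQ
      have hQm : Q ≤ m := IsLocalRing.le_maximalIdeal hQ.ne_top
      rw [hbot] at hQm
      exact le_bot_iff.1 hQm
    · intro I hI
      have hIm : I ≤ m := IsLocalRing.le_maximalIdeal hI
      rw [hbot] at hIm
      exact ⟨1, by rw [pow_one]; exact le_bot_iff.1 hIm⟩
  · -- `m ≠ ⊥`, hence `P ≠ ⊥` and `P` is maximal.
    have hP0 : P ≠ ⊥ := by
      rintro rfl
      exact hbot (by rw [← hmap, Ideal.map_bot])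
    have hPmax : P.IsMaximal := hdim P hP hP0
    -- Every prime of `B` is `m` or `⊥`.
    have primesB : ∀ Q : Ideal B, Q.IsPrime → Q = m ∨ Q = ⊥ := by
      intro Q hQ
      by_cases hQ0 : Ideal.comap f Q = ⊥
      · right
        rw [← IsLocalization.map_comap P.primeCompl B Q, Ideal.under_def, hQ0, Ideal.map_bot]
      · left
        haveI := hQ
        have hcp : (Ideal.comap f Q).IsPrime := Ideal.IsPrime.comap f
        have hQP : Ideal.comap f Q ≤ P :=
          le_of_le_of_eq (Ideal.comap_mono (IsLocalRing.le_maximalIdeal hQ.ne_top)) hcm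
        have hQPe : Ideal.comap f Q = P := (hdim _ hcp hQ0).eq_of_le hP.ne_top hQP
        rw [← IsLocalization.map_comap P.primeCompl B Q, Ideal.under_def, hQPe, hmap]
    -- Radicals of suitable proper ideals equal `m`.
    have radB : ∀ K : Ideal B, K ≠ ⊤ → (¬ (⊥ : Ideal B).IsPrime ∨ K ≠ ⊥) →
        K.radical = m := by
      intro K hKtop hKbot
      refine le_antisymm ?_ ?_
      · have : K.radical ≤ m.radical :=
          Ideal.radical_mono (IsLocalRing.le_maximalIdeal hKtop)
        rwa [((IsLocalRing.maximalIdeal.isMaximal B).isPrime).radical] at this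
      · rw [Ideal.radical_eq_sInf]
        refine le_sInf ?_
        rintro J ⟨hKJ, hJp⟩
        rcases primesB J hJp with rfl | rfl
        · exact le_rfl
        · rcases hKbot with h | h
          · exact absurd hJp h
          · exact absurd (le_bot_iff.1 hKJ) h
    -- Key factorization in `B`.
    have E : ∀ K : Ideal B, K.radical = m → K ≠ ⊤ →
        ∃ (x : B) (n : ℕ), x ∈ nonZeroDivisors B ∧ 1 ≤ n ∧
          K = Ideal.span {x} * m ^ n := by
      intro K hKrad hKtop
      have hc : Ideal.comap f K ≠ ⊤ := by
        intro h
        exact hKtop (by rw [← IsLocalization.map_comap P.primeCompl B K, Ideal.under_def, h, Ideal.map_top])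
      obtain ⟨J, L, hJ, hL0, hLH, hprod⟩ := hisp _ hc
      have hHP : ∀ H ∈ L, H = P := by
        intro H hH
        have h1 : Ideal.comap f K ≤ H :=
          hprod ▸ le_trans Ideal.mul_le_right (list_prod_le_of_mem hH)
        have h2 : P ≤ H := by
          have h3 : (Ideal.comap f K).radical ≤ H := (hLH H hH).2.radical_le_iff.2 h1
          rwa [← Ideal.comap_radical, hKrad, hcm] at h3
        exact (hPmax.eq_of_le (hLH H hH).1 h2).symm
      obtain ⟨x, hxspan⟩ := (hJ.2.2 P hPmax).principal
      rw [Ideal.submodule_span_eq] at hxspan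
      obtain ⟨a, haJ, hareg⟩ := hJ.1
      have hfa : f a ∈ Ideal.span {x} := by
        rw [← hxspan]
        exact Ideal.mem_map_of_mem f haJ
      obtain ⟨c, hc'⟩ := Ideal.mem_span_singleton'.1 hfa
      have hfareg : f a ∈ nonZeroDivisors B :=
        algebraMap_mem_nonZeroDivisors_localization P.primeCompl hareg
      have hxreg : x ∈ nonZeroDivisors B := by
        rw [mem_nonZeroDivisors_iff_right]
        intro z hz
        refine mem_nonZeroDivisors_iff_right.1 hfareg z ?_
        rw [← hc']
        calc z * (c * x) = c * (z * x) := by ring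
        _ = 0 := by rw [hz, mul_zero]
      refine ⟨x, L.length, hxreg, ?_, ?_⟩
      · rcases L with _ | ⟨K', T⟩
        · exact absurd rfl hL0
        · simp
      · calc K = Ideal.map f (Ideal.comap f K) :=
              (IsLocalization.map_comap P.primeCompl B K).symm
        _ = Ideal.map f J * Ideal.map f L.prod := by rw [hprod, Ideal.map_mul]
        _ = Ideal.span {x} * m ^ L.length := by
            rw [hxspan, map_list_prod_eq_pow f hHP, hmap]
    by_cases hdom : (⊥ : Ideal B).IsPrime
    · -- `B` is a domain; show it is a DVR.
      left
      haveI : NoZeroDivisors B := by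
        refine ⟨fun {a b} h => ?_⟩
        have hab : a * b ∈ (⊥ : Ideal B) := by rw [Ideal.mem_bot]; exact h
        rcases hdom.mem_or_mem hab with h' | h'
        · left; exact Ideal.mem_bot.1 h'
        · right; exact Ideal.mem_bot.1 h'
      haveI hD : IsDomain B := NoZeroDivisors.to_isDomain B
      -- `m` is not idempotent.
      have hmm : m * m ≠ m := by
        intro h2
        obtain ⟨t, htm, ht0⟩ := Submodule.exists_mem_ne_zero_of_ne_bot hbot
        have hpow : ∀ n : ℕ, m ^ (n + 1) = m := by
          intro n
          induction n with
          | zero => exact pow_one m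
          | succ k ih => rw [pow_succ, ih, h2]
        have hKtop : Ideal.span {t} ≠ ⊤ := by
          intro h
          exact hmtop (top_le_iff.1 (h ▸ (Ideal.span_le.2 (Set.singleton_subset_iff.2 htm))))
        have hKbot : Ideal.span {t} ≠ ⊥ := fun h => ht0 (Ideal.span_singleton_eq_bot.1 h)
        obtain ⟨x, n, hxreg, hn, hK⟩ :=
          E (Ideal.span {t}) (radB _ hKtop (Or.inr hKbot)) hKtop
        obtain ⟨k, rfl⟩ := Nat.exists_eq_add_of_le hn
        rw [add_comm, hpow] at hK
        have htmem : t ∈ Ideal.span {x} * m := hK ▸ Ideal.mem_span_singleton_self t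
        obtain ⟨s, hsm, hst⟩ := Ideal.mem_span_singleton_mul.1 htmem
        have hxne : x ≠ 0 := nonZeroDivisors.ne_zero hxreg
        have hms : m = Ideal.span {s} := by
          refine (span_singleton_cancel hxne ?_).symm
          rw [← hK, Ideal.span_singleton_mul_span_singleton, hst]
        have hs2 : s ∈ Ideal.span {s * s} := by
          rw [← Ideal.span_singleton_mul_span_singleton, ← hms, h2, hms]
          exact Ideal.mem_span_singleton_self s
        obtain ⟨d, hd⟩ := Ideal.mem_span_singleton.1 hs2
        have hs0 : s ≠ 0 := by
          intro h
          exact hbot (by rw [hms, h, Ideal.span_singleton_eq_bot])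
        have : s * 1 = s * (s * d) := by rw [mul_one, ← mul_assoc]; exact hd
        have hsu : IsUnit s := IsUnit.of_mul_eq_one d (mul_left_cancel₀ hs0 this).symm
        exact hmtop (by rw [hms, Ideal.span_singleton_eq_top]; exact hsu)
      -- pick `t ∈ m \ m^2` and show `m` is principal.
      have hnotle : ¬ m ≤ m ^ 2 := by
        intro hle
        exact hmm (by rw [← pow_two]; exact le_antisymm (Ideal.pow_le_self two_ne_zero) hle)
      obtain ⟨t, htm, htm2⟩ := SetLike.not_le_iff_exists.1 hnotle
      have ht0 : t ≠ 0 := fun h => htm2 (h ▸ Submodule.zero_mem _)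
      have hKtop : Ideal.span {t} ≠ ⊤ := by
        intro h
        exact hmtop (top_le_iff.1 (h ▸ (Ideal.span_le.2 (Set.singleton_subset_iff.2 htm))))
      have hKbot : Ideal.span {t} ≠ ⊥ := fun h => ht0 (Ideal.span_singleton_eq_bot.1 h)
      obtain ⟨x, n, hxreg, hn, hK⟩ :=
        E (Ideal.span {t}) (radB _ hKtop (Or.inr hKbot)) hKtop
      have hn1 : n = 1 := by
        by_contra h
        have h2n : 2 ≤ n := by omega
        have : t ∈ m ^ 2 := by
          have h1 : t ∈ Ideal.span {x} * m ^ n := hK ▸ Ideal.mem_span_singleton_self t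
          exact Ideal.pow_le_pow_right h2n (Ideal.mul_le_right h1)
        exact htm2 this
      rw [hn1, pow_one] at hK
      have htmem : t ∈ Ideal.span {x} * m := hK ▸ Ideal.mem_span_singleton_self t
      obtain ⟨s, hsm, hst⟩ := Ideal.mem_span_singleton_mul.1 htmem
      have hxne : x ≠ 0 := nonZeroDivisors.ne_zero hxreg
      have hms : m = Ideal.span {s} := by
        refine (span_singleton_cancel hxne ?_).symm
        rw [← hK, Ideal.span_singleton_mul_span_singleton, hst]
      -- every ideal of `B` is principal
      have hpir : IsPrincipalIdealRing B := by
        refine ⟨fun K => ?_⟩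
        by_cases hKt : K = ⊤
        · rw [hKt]; exact top_isPrincipal
        by_cases hKb : K = ⊥
        · rw [hKb]; exact bot_isPrincipal
        obtain ⟨y, k, hyreg, hk, hKeq⟩ := E K (radB K hKt (Or.inr hKb)) hKt
        refine ⟨⟨y * s ^ k, ?_⟩⟩
        rw [hKeq, hms, Ideal.span_singleton_pow, Ideal.span_singleton_mul_span_singleton,
          Ideal.submodule_span_eq]
      exact ⟨hD, ⟨hbot⟩⟩
    · -- `m` is the unique prime of `B`: special primary.
      right
      refine ⟨m, (IsLocalRing.maximalIdeal.isMaximal B).isPrime, ?_, ?_⟩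
      · intro Q hQ
        rcases primesB Q hQ with h | h
        · exact h
        · exact absurd (h ▸ hQ) hdom
      · intro I hI
        obtain ⟨x, n, hxreg, hn, hIeq⟩ := E I (radB I hI (Or.inl hdom)) hI
        have hxu : IsUnit x := by
          by_contra hxu
          have hxm : x ∈ m := (IsLocalRing.mem_maximalIdeal x).2 hxu
          have hxrad : x ∈ (⊥ : Ideal B).radical := by
            rw [radB ⊥ bot_ne_top (Or.inl hdom)]
            exact hxm
          obtain ⟨k, hk⟩ := Ideal.mem_radical_iff.1 hxrad
          rw [Ideal.mem_bot] at hk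
          have hreg : (0 : B) ∈ nonZeroDivisors B := hk ▸ pow_mem hxreg k
          exact nonZeroDivisors.ne_zero hreg rfl
        exact ⟨n, by rw [hIeq, Ideal.span_singleton_eq_top.2 hxu, Ideal.top_mul]⟩
end

section
/- Let A be a commutative ring and E an A-module. (1) If the trivial ring extension A∝E is a strongly ISP-ring, then A is a strongly ISP-ring. (2) If A is a von Neumann regular ring and E is a multiplication A-module, then A∝E is a strongly ISP-ring. (3) If A∝E is a strongly ISP-ring and E = sE for every s ∈ S = A ∖ (Z(A) ∪ Z(E)), where Z(A) is the set of zero-divisors of A and Z(E) = {a ∈ A : ae = 0 for some nonzero e ∈ E}, then E is a multiplication A-module. -/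
open TrivSqZeroExt

section ISPAux

variable {A E : Type*} [CommRing A] [AddCommGroup E] [Module A E] [Module Aᵐᵒᵖ E]
  [IsCentralScalar A E]

/-- The first-coordinate projection as a ring hom. -/
noncomputable def tszeFst : TrivSqZeroExt A E →+* A :=
  (TrivSqZeroExt.fstHom A A E).toRingHom

@[simp] lemma tszeFst_apply (x : TrivSqZeroExt A E) : tszeFst x = x.fst := rfl

lemma tszeFst_surj : Function.Surjective (tszeFst (A := A) (E := E)) :=
  fun a => ⟨inl a, rfl⟩

/-- The "homogeneous" ideal `K ∝ N` of the trivial extension (normalized so that it is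
always an ideal). -/
def tszeIdl (K : Ideal A) (N : Submodule A E) : Ideal (TrivSqZeroExt A E) where
  carrier := {x | x.fst ∈ K ∧ x.snd ∈ N ⊔ K • (⊤ : Submodule A E)}
  add_mem' := by
    rintro x y ⟨hx1, hx2⟩ ⟨hy1, hy2⟩
    exact ⟨add_mem hx1 hy1, add_mem hx2 hy2⟩
  zero_mem' := ⟨zero_mem _, zero_mem _⟩
  smul_mem' := by
    rintro c x ⟨hx1, hx2⟩
    refine ⟨?_, ?_⟩
    · show (c * x).fst ∈ K
      rw [fst_mul]
      exact Ideal.mul_mem_left _ _ hx1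
    · show (c * x).snd ∈ _
      rw [snd_mul, op_smul_eq_smul]
      refine add_mem (Submodule.smul_mem _ _ hx2) (Submodule.mem_sup_right ?_)
      exact Submodule.smul_mem_smul hx1 trivial

lemma mem_tszeIdl {K : Ideal A} {N : Submodule A E}
    (h : K • (⊤ : Submodule A E) ≤ N) {x : TrivSqZeroExt A E} :
    x ∈ tszeIdl K N ↔ x.fst ∈ K ∧ x.snd ∈ N := by
  have : N ⊔ K • (⊤ : Submodule A E) = N := sup_eq_left.mpr h
  change x.fst ∈ K ∧ x.snd ∈ _ ↔ _
  rw [this]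

lemma mem_tszeIdl_top {K : Ideal A} {x : TrivSqZeroExt A E} :
    x ∈ tszeIdl K (⊤ : Submodule A E) ↔ x.fst ∈ K :=
  (mem_tszeIdl le_top).trans (and_iff_left trivial)

lemma mem_tszeIdl_bot {N : Submodule A E} {x : TrivSqZeroExt A E} :
    x ∈ tszeIdl (⊥ : Ideal A) N ↔ x.fst = 0 ∧ x.snd ∈ N := by
  rw [mem_tszeIdl (by simp)]; rfl

lemma tszeIdl_top_ne_top {K : Ideal A} (h : K ≠ ⊤) :
    tszeIdl K (⊤ : Submodule A E) ≠ ⊤ := by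
  intro ht
  apply h
  rw [Ideal.eq_top_iff_one]
  have : (1 : TrivSqZeroExt A E) ∈ tszeIdl K (⊤ : Submodule A E) := ht ▸ trivial
  simpa using mem_tszeIdl_top.mp this

lemma tszeIdl_top_top : tszeIdl (⊤ : Ideal A) (⊤ : Submodule A E) = ⊤ := by
  rw [Ideal.eq_top_iff_one, mem_tszeIdl_top]
  trivial

/-- projection of a homogeneous ideal. -/
lemma map_tszeFst_tszeIdl (K : Ideal A) (N : Submodule A E) :
    Ideal.map tszeFst (tszeIdl K N) = K := by
  apply le_antisymm
  · rw [Ideal.map_le_iff_le_comap]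
    intro x hx
    exact hx.1
  · intro a ha
    exact Ideal.mem_map_of_mem _ (show inl a ∈ tszeIdl K N from
      ⟨by simpa using ha, by simp⟩)

/-- a radical ideal of the trivial extension is homogeneous with full module part. -/
lemma radical_eq_tszeIdl {H : Ideal (TrivSqZeroExt A E)} (hH : H.IsRadical) :
    H = tszeIdl (Ideal.map tszeFst H) (⊤ : Submodule A E) := by
  have hinr : ∀ e : E, (inr e : TrivSqZeroExt A E) ∈ H := by
    intro e
    apply hH
    exact ⟨2, by rw [pow_two, inr_mul_inr]; exact H.zero_mem⟩
  apply le_antisymm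
  · intro x hx
    rw [mem_tszeIdl_top]
    exact Ideal.mem_map_of_mem _ hx
  · intro x hx
    rw [mem_tszeIdl_top] at hx
    obtain ⟨y, hy, hyx⟩ :=
      (Ideal.mem_map_iff_of_surjective (tszeFst (A := A) (E := E)) tszeFst_surj).mp hx
    have : x = y + inr (x.snd - y.snd) := by
      ext
      · simp [← hyx]
      · simp
    rw [this]
    exact H.add_mem hy (hinr _)



lemma tszeIdl_mul_tszeIdl {K₁ K₂ : Ideal A} {N₁ N₂ : Submodule A E}
    (h₁ : K₁ • (⊤ : Submodule A E) ≤ N₁) (h₂ : K₂ • (⊤ : Submodule A E) ≤ N₂) :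
    tszeIdl K₁ N₁ * tszeIdl K₂ N₂ = tszeIdl (K₁ * K₂) (K₁ • N₂ ⊔ K₂ • N₁) := by
  have side : (K₁ * K₂) • (⊤ : Submodule A E) ≤ K₁ • N₂ ⊔ K₂ • N₁ := by
    rw [← smul_eq_mul, Submodule.smul_assoc]
    exact le_trans (Submodule.smul_mono le_rfl h₂) le_sup_left
  apply le_antisymm
  · rw [Ideal.mul_le]
    intro r hr s hs
    rw [mem_tszeIdl h₁] at hr
    rw [mem_tszeIdl h₂] at hs
    rw [mem_tszeIdl side]
    constructor
    · rw [fst_mul]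
      exact Ideal.mul_mem_mul hr.1 hs.1
    · rw [snd_mul, op_smul_eq_smul]
      exact add_mem (Submodule.mem_sup_left (Submodule.smul_mem_smul hr.1 hs.2))
        (Submodule.mem_sup_right (Submodule.smul_mem_smul hs.1 hr.2))
  · intro x hx
    rw [mem_tszeIdl side] at hx
    obtain ⟨h1, h2⟩ := hx
    have hx' : x = inl x.fst + inr x.snd := by ext <;> simp
    rw [hx']
    refine add_mem ?_ ?_
    · refine Submodule.mul_induction_on h1 (fun m hm n hn => ?_) (fun a b ha hb => ?_)
      · rw [← inl_mul_inl (R := A) (M := E)]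
        exact Ideal.mul_mem_mul ((mem_tszeIdl h₁).mpr ⟨hm, by simp⟩)
          ((mem_tszeIdl h₂).mpr ⟨hn, by simp⟩)
      · rw [inl_add]; exact add_mem ha hb
    · rw [Submodule.mem_sup] at h2
      obtain ⟨m₁, hm₁, m₂, hm₂, heq⟩ := h2
      rw [← heq, inr_add]
      refine add_mem ?_ ?_
      · refine Submodule.smul_induction_on hm₁ (fun a ha n hn => ?_) (fun a b ha hb => ?_)
        · rw [← inl_mul_inr]
          exact Ideal.mul_mem_mul ((mem_tszeIdl h₁).mpr ⟨ha, by simp⟩)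
            ((mem_tszeIdl h₂).mpr ⟨K₂.zero_mem, hn⟩)
        · rw [inr_add]; exact add_mem ha hb
      · refine Submodule.smul_induction_on hm₂ (fun a ha n hn => ?_) (fun a b ha hb => ?_)
        · have : (inr (a • n) : TrivSqZeroExt A E) = inr n * inl a := by
            rw [inr_mul_inl, op_smul_eq_smul]
          rw [this]
          exact Ideal.mul_mem_mul ((mem_tszeIdl h₁).mpr ⟨K₁.zero_mem, hn⟩)
            ((mem_tszeIdl h₂).mpr ⟨ha, by simp⟩)
        · rw [inr_add]; exact add_mem ha hb

lemma mul_tszeIdl_bot (J : Ideal (TrivSqZeroExt A E)) (N : Submodule A E) :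
    J * tszeIdl ⊥ N = tszeIdl ⊥ ((Ideal.map tszeFst J) • N) := by
  apply le_antisymm
  · rw [Ideal.mul_le]
    intro r hr s hs
    rw [mem_tszeIdl_bot] at hs
    rw [mem_tszeIdl_bot]
    constructor
    · rw [fst_mul, hs.1, mul_zero]
    · rw [snd_mul, hs.1, MulOpposite.op_zero, zero_smul, add_zero]
      exact Submodule.smul_mem_smul (Ideal.mem_map_of_mem _ hr) hs.2
  · intro x hx
    rw [mem_tszeIdl_bot] at hx
    obtain ⟨h1, h2⟩ := hx
    have hx' : x = inr x.snd := by ext <;> simp [h1]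
    rw [hx']
    refine Submodule.smul_induction_on h2 (fun a ha n hn => ?_) (fun a b ha hb => ?_)
    · obtain ⟨y, hy, rfl⟩ :=
        (Ideal.mem_map_iff_of_surjective (tszeFst (A := A) (E := E)) tszeFst_surj).mp ha
      have : (inr (tszeFst y • n) : TrivSqZeroExt A E) = y * inr n := by
        ext
        · simp
        · simp
      rw [this]
      exact Ideal.mul_mem_mul hy ((mem_tszeIdl_bot).mpr ⟨by simp, hn⟩)
    · rw [inr_add]; exact add_mem ha hb

lemma tszeIdl_top_isRadical {K : Ideal A} (hK : K.IsRadical) :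
    (tszeIdl K (⊤ : Submodule A E)).IsRadical := by
  rintro x ⟨n, hn⟩
  rw [mem_tszeIdl_top] at hn ⊢
  rw [fst_pow] at hn
  exact hK ⟨n, hn⟩

lemma map_tszeFst_list_prod (L : List (Ideal (TrivSqZeroExt A E))) :
    Ideal.map tszeFst L.prod = (L.map (Ideal.map tszeFst)).prod := by
  induction L with
  | nil => simp [Ideal.one_eq_top, Ideal.map_top]
  | cons H L ih => rw [List.prod_cons, Ideal.map_mul, ih, List.map_cons, List.prod_cons]

lemma tsze_list_prod_eq (L : List (Ideal (TrivSqZeroExt A E)))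
    (hL : ∀ H ∈ L, H.IsRadical) :
    ∃ C : Ideal A, (L.map (Ideal.map tszeFst)).prod ≤ C ∧
      L.prod = tszeIdl ((L.map (Ideal.map tszeFst)).prod) (C • (⊤ : Submodule A E)) := by
  induction L with
  | nil =>
    refine ⟨⊤, le_top, ?_⟩
    simp only [List.map_nil, List.prod_nil, Ideal.one_eq_top]
    rw [Submodule.top_smul]
    exact tszeIdl_top_top.symm
  | cons H L ih =>
    obtain ⟨C, hC, hprod⟩ := ih (fun H' hH' => hL H' (List.mem_cons_of_mem _ hH'))
    refine ⟨Ideal.map tszeFst H * C ⊔ (L.map (Ideal.map tszeFst)).prod, ?_, ?_⟩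
    · rw [List.map_cons, List.prod_cons]
      exact le_trans Ideal.mul_le_right le_sup_right
    · rw [List.prod_cons, List.map_cons, List.prod_cons, hprod]
      conv_lhs => rw [radical_eq_tszeIdl (hL H (List.mem_cons_self (a := H) (l := L)))]
      rw [tszeIdl_mul_tszeIdl le_top (Submodule.smul_mono hC le_rfl)]
      congr 1
      rw [Submodule.sup_smul, ← smul_eq_mul, Submodule.smul_assoc]

end ISPAux

section ISPAux2

set_option linter.unusedSectionVars false

variable {A E : Type*} [CommRing A] [AddCommGroup E] [Module A E] [Module Aᵐᵒᵖ E]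
  [IsCentralScalar A E]

lemma fst_mem_nonZeroDivisors {x : TrivSqZeroExt A E}
    (hx : x ∈ nonZeroDivisors (TrivSqZeroExt A E)) : x.fst ∈ nonZeroDivisors A := by
  rw [mem_nonZeroDivisors_iff_right]
  intro b hb
  by_cases hbe : b • x.snd = 0
  · have h1 : (inl b : TrivSqZeroExt A E) * x = 0 := by
      ext
      · simpa using hb
      · simpa using hbe
    have h2 := mem_nonZeroDivisors_iff_right.mp hx _ h1
    simpa using congrArg fst h2
  · exfalso
    apply hbe
    have h1 : (inr (b • x.snd) : TrivSqZeroExt A E) * x = 0 := by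
      ext
      · simp
      · simp only [snd_mul, snd_inr, fst_inr, zero_smul, zero_add, snd_zero, op_smul_eq_smul]
        rw [smul_smul, mul_comm, hb, zero_smul]
    have h2 := mem_nonZeroDivisors_iff_right.mp hx _ h1
    simpa using congrArg snd h2

lemma top_isInvertibleIdeal {B : Type*} [CommRing B] : (⊤ : Ideal B).IsInvertibleIdeal := by
  refine ⟨⟨1, trivial, (nonZeroDivisors B).one_mem⟩,
    ⟨{1}, by rw [Finset.coe_singleton, Ideal.span_singleton_one]⟩, ?_⟩
  intro M hM
  haveI := hM.isPrime
  rw [Ideal.map_top]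
  exact ⟨⟨1, Ideal.span_singleton_one.symm⟩⟩

lemma map_tszeFst_invertible {J : Ideal (TrivSqZeroExt A E)} (hJ : J.IsInvertibleIdeal) :
    (Ideal.map tszeFst J).IsInvertibleIdeal := by
  obtain ⟨⟨x, hxJ, hxreg⟩, hfg, hloc⟩ := hJ
  refine ⟨⟨x.fst, Ideal.mem_map_of_mem _ hxJ, fst_mem_nonZeroDivisors hxreg⟩, hfg.map _, ?_⟩
  intro M hM
  haveI := hM.isPrime
  haveI hPmax : (Ideal.comap (tszeFst (A := A) (E := E)) M).IsMaximal :=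
    Ideal.comap_isMaximal_of_surjective _ tszeFst_surj
  haveI := hPmax.isPrime
  obtain ⟨y, hy⟩ := (hloc _ hPmax).principal
  have key : Ideal.map (algebraMap A (Localization.AtPrime M)) (Ideal.map tszeFst J)
      = Ideal.map (Localization.localRingHom (Ideal.comap (tszeFst (A := A) (E := E)) M) M tszeFst rfl)
          (Ideal.map (algebraMap (TrivSqZeroExt A E)
            (Localization.AtPrime (Ideal.comap (tszeFst (A := A) (E := E)) M))) J) := by
    rw [Ideal.map_map, Ideal.map_map]
    congr 1
    ext z
    simp [Localization.localRingHom_to_map]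
  rw [key, hy]
  have hsp : Ideal.map (Localization.localRingHom (Ideal.comap (tszeFst (A := A) (E := E)) M) M
        tszeFst rfl) (Ideal.span {y}) =
      Ideal.span {Localization.localRingHom (Ideal.comap (tszeFst (A := A) (E := E)) M) M
        tszeFst rfl y} := by
    rw [Ideal.map_span, Set.image_singleton]
  exact ⟨⟨_, hsp⟩⟩

lemma vnr_ideal_isRadical {B : Type*} [CommRing B] (hv : ∀ a : B, ∃ b : B, a * b * a = a)
    (K : Ideal B) : K.IsRadical := by
  rintro x ⟨n, hn⟩
  obtain ⟨b, hb⟩ := hv x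
  have h2 : x = x * x * b := by
    conv_lhs => rw [← hb]
    ring
  have key : ∀ m : ℕ, x = x ^ (m + 1) * b ^ m := by
    intro m
    induction m with
    | zero => simp
    | succ k ih =>
      calc x = x * x * b := h2
      _ = (x ^ (k + 1) * b ^ k) * x * b := by rw [← ih]
      _ = x ^ (k + 2) * b ^ (k + 1) := by ring
  match n, hn with
  | 0, hn =>
    have h1 : (1 : B) ∈ K := by simpa using hn
    have : K = ⊤ := (Ideal.eq_top_iff_one K).mpr h1
    rw [this]; trivial
  | m + 1, hn =>
    rw [key m]
    exact K.mul_mem_right _ hn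

lemma vnr_le_sq {B : Type*} [CommRing B] (hv : ∀ a : B, ∃ b : B, a * b * a = a)
    (K : Ideal B) : K ≤ K * K := by
  intro a ha
  obtain ⟨b, hb⟩ := hv a
  have : a = a * (b * a) := by
    conv_lhs => rw [← hb]
    ring
  rw [this]
  exact Ideal.mul_mem_mul ha (K.mul_mem_left b ha)

/-- The submodule of second components of an ideal of the trivial extension. -/
def sndSub (I : Ideal (TrivSqZeroExt A E)) : Submodule A E where
  carrier := {e | (inr e : TrivSqZeroExt A E) ∈ I}
  zero_mem' := by
    show (inr 0 : TrivSqZeroExt A E) ∈ I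
    rw [inr_zero]; exact I.zero_mem
  add_mem' := by
    intro a b ha hb
    show (inr (a + b) : TrivSqZeroExt A E) ∈ I
    rw [inr_add]; exact I.add_mem ha hb
  smul_mem' := by
    intro a e he
    show (inr (a • e) : TrivSqZeroExt A E) ∈ I
    rw [← inl_mul_inr]
    exact I.mul_mem_left _ he

lemma mem_sndSub {I : Ideal (TrivSqZeroExt A E)} {e : E} :
    e ∈ sndSub I ↔ (inr e : TrivSqZeroExt A E) ∈ I := Iff.rfl

lemma map_smul_top_le (I : Ideal (TrivSqZeroExt A E)) :
    (Ideal.map tszeFst I) • (⊤ : Submodule A E) ≤ sndSub I := by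
  rw [Submodule.smul_le]
  intro a ha e _
  obtain ⟨y, hy, rfl⟩ :=
    (Ideal.mem_map_iff_of_surjective (tszeFst (A := A) (E := E)) tszeFst_surj).mp ha
  show (inr (tszeFst y • e) : TrivSqZeroExt A E) ∈ I
  have heq : (inr (tszeFst y • e) : TrivSqZeroExt A E) = y * inr e := by
    ext
    · simp
    · simp
  rw [heq]
  exact I.mul_mem_right _ hy

lemma vnr_ideal_homogeneous (hv : ∀ a : A, ∃ b : A, a * b * a = a)
    (I : Ideal (TrivSqZeroExt A E)) :
    I = tszeIdl (Ideal.map tszeFst I) (sndSub I) := by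
  apply le_antisymm
  · intro x hx
    rw [mem_tszeIdl (map_smul_top_le I)]
    refine ⟨Ideal.mem_map_of_mem _ hx, ?_⟩
    obtain ⟨b, hb⟩ := hv x.fst
    have hdiff : x - x * inl (b * x.fst) = inr (x.snd - (b * x.fst) • x.snd) := by
      ext
      · simp only [fst_sub, fst_mul, fst_inl, fst_inr]
        rw [show x.fst * (b * x.fst) = x.fst * b * x.fst by ring, hb, sub_self]
      · simp [← MulOpposite.op_mul, op_smul_eq_smul]
    have h1 : (inr (x.snd - (b * x.fst) • x.snd) : TrivSqZeroExt A E) ∈ I := by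
      rw [← hdiff]
      exact I.sub_mem hx (I.mul_mem_right _ hx)
    have h2 : (b * x.fst) • x.snd ∈ sndSub I :=
      map_smul_top_le I (Submodule.smul_mem_smul
        (Ideal.mul_mem_left _ b (Ideal.mem_map_of_mem _ hx)) trivial)
    have h3 : x.snd - (b * x.fst) • x.snd ∈ sndSub I := h1
    simpa using add_mem h3 h2
  · intro x hx
    rw [mem_tszeIdl (map_smul_top_le I)] at hx
    obtain ⟨h1, h2⟩ := hx
    obtain ⟨y, hy, hyx⟩ :=
      (Ideal.mem_map_iff_of_surjective (tszeFst (A := A) (E := E)) tszeFst_surj).mp h1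
    obtain ⟨b, hb⟩ := hv y.fst
    have hprod : y * inl (b * y.fst) = inl y.fst + inr ((b * y.fst) • y.snd) := by
      ext
      · simp only [fst_mul, fst_inl, fst_add, fst_inr]
        rw [show y.fst * (b * y.fst) = y.fst * b * y.fst by ring, hb, add_zero]
      · simp [← MulOpposite.op_mul, op_smul_eq_smul]
    have h4 : (inr ((b * y.fst) • y.snd) : TrivSqZeroExt A E) ∈ I :=
      map_smul_top_le I (Submodule.smul_mem_smul
        (Ideal.mul_mem_left _ b (Ideal.mem_map_of_mem _ hy)) trivial)
    have h5 : (inl y.fst : TrivSqZeroExt A E) ∈ I := by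
      have := I.sub_mem (I.mul_mem_right (inl (b * y.fst)) hy) h4
      rwa [hprod, add_sub_cancel_right] at this
    have h6 : x = inl y.fst + inr x.snd := by
      ext
      · simp [← hyx]
      · simp
    rw [h6]
    exact I.add_mem h5 h2

end ISPAux2

section ISPMain

set_option linter.unusedSectionVars false

variable {A E : Type*} [CommRing A] [AddCommGroup E] [Module A E] [Module Aᵐᵒᵖ E]
  [IsCentralScalar A E]

lemma isp_part1 (hR : IsStronglyISPRing (TrivSqZeroExt A E)) : IsStronglyISPRing A := by
  intro I hI
  obtain ⟨J, L, hJ, hLne, hLmem, heq⟩ := hR (tszeIdl I ⊤) (tszeIdl_top_ne_top hI)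
  refine ⟨Ideal.map tszeFst J, L.map (Ideal.map tszeFst), map_tszeFst_invertible hJ,
    by simpa using hLne, ?_, ?_⟩
  · rintro K hK
    rw [List.mem_map] at hK
    obtain ⟨H, hH, rfl⟩ := hK
    obtain ⟨hHne, hHrad⟩ := hLmem H hH
    constructor
    · intro htop
      apply hHne
      rw [radical_eq_tszeIdl hHrad, htop]
      exact tszeIdl_top_top
    · rintro a ⟨n, hn⟩
      have h1 : (inl a : TrivSqZeroExt A E) ^ n ∈ H := by
        rw [radical_eq_tszeIdl hHrad, mem_tszeIdl_top, fst_pow, fst_inl]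
        exact hn
      have h2 : (inl a : TrivSqZeroExt A E) ∈ H := hHrad ⟨n, h1⟩
      simpa using Ideal.mem_map_of_mem tszeFst h2
  · have h := congrArg (Ideal.map tszeFst) heq
    rwa [map_tszeFst_tszeIdl, Ideal.map_mul, map_tszeFst_list_prod] at h

lemma isp_part3 (hR : IsStronglyISPRing (TrivSqZeroExt A E)) (N : Submodule A E) :
    ∃ I : Ideal A, N = I • (⊤ : Submodule A E) := by
  by_cases htriv : (1 : A) = 0
  · refine ⟨⊥, ?_⟩
    have hz : ∀ e : E, e = 0 := fun e => by
      calc e = (1 : A) • e := (one_smul A e).symm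
      _ = (0 : A) • e := by rw [htriv]
      _ = 0 := zero_smul A e
    ext e
    simp [hz e]
  · have hne : tszeIdl (⊥ : Ideal A) N ≠ ⊤ := by
      intro ht
      have h1 : (1 : TrivSqZeroExt A E) ∈ tszeIdl (⊥ : Ideal A) N := ht ▸ trivial
      rw [mem_tszeIdl_bot] at h1
      exact htriv (by simpa using h1.1)
    obtain ⟨J, L, hJ, hLne, hLmem, heq⟩ := hR _ hne
    obtain ⟨C, hC, hprodeq⟩ := tsze_list_prod_eq L (fun H hH => (hLmem H hH).2)
    have hmap : (⊥ : Ideal A) = Ideal.map tszeFst J * (L.map (Ideal.map tszeFst)).prod := by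
      have h := congrArg (Ideal.map tszeFst) heq
      rwa [map_tszeFst_tszeIdl, Ideal.map_mul, map_tszeFst_list_prod] at h
    obtain ⟨⟨x, hxJ, hxreg⟩, -, -⟩ := hJ
    have hs := fst_mem_nonZeroDivisors hxreg
    have hPbot : (L.map (Ideal.map tszeFst)).prod = ⊥ := by
      rw [eq_bot_iff]
      intro k hk
      have h1 : x.fst * k ∈ Ideal.map tszeFst J * (L.map (Ideal.map tszeFst)).prod :=
        Ideal.mul_mem_mul (Ideal.mem_map_of_mem _ hxJ) hk
      rw [← hmap, Ideal.mem_bot] at h1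
      rw [Ideal.mem_bot]
      exact mem_nonZeroDivisors_iff_right.mp hs k (by rwa [mul_comm])
    rw [hprodeq, hPbot, mul_tszeIdl_bot] at heq
    refine ⟨Ideal.map tszeFst J * C, ?_⟩
    have hsm : (Ideal.map tszeFst J) • (C • (⊤ : Submodule A E))
        = (Ideal.map tszeFst J * C) • (⊤ : Submodule A E) := by
      rw [← smul_eq_mul, Submodule.smul_assoc]
    ext e
    constructor
    · intro he
      have h1 : (inr e : TrivSqZeroExt A E) ∈ tszeIdl (⊥ : Ideal A) N :=
        mem_tszeIdl_bot.mpr ⟨by simp, by simpa using he⟩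
      rw [heq, mem_tszeIdl_bot] at h1
      rw [← hsm]
      simpa using h1.2
    · intro he
      have h1 : (inr e : TrivSqZeroExt A E) ∈ tszeIdl (⊥ : Ideal A)
          ((Ideal.map tszeFst J) • (C • (⊤ : Submodule A E))) :=
        mem_tszeIdl_bot.mpr ⟨by simp, by rw [hsm]; simpa using he⟩
      rw [← heq, mem_tszeIdl_bot] at h1
      simpa using h1.2

set_option maxHeartbeats 1000000 in
lemma isp_part2 (hv : ∀ a : A, ∃ b : A, a * b * a = a)
    (hmul : ∀ N : Submodule A E, ∃ I : Ideal A, N = I • (⊤ : Submodule A E)) :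
    IsStronglyISPRing (TrivSqZeroExt A E) := by
  intro I hI
  have hhom : I = tszeIdl (Ideal.map tszeFst I) (sndSub I) := vnr_ideal_homogeneous hv I
  have hside : (Ideal.map tszeFst I) • (⊤ : Submodule A E) ≤ sndSub I := map_smul_top_le I
  have hKtop : Ideal.map tszeFst I ≠ ⊤ := by
    intro hKt
    apply hI
    have hNtop : sndSub I = ⊤ := by
      rw [eq_top_iff]
      intro e _
      refine hside ?_
      rw [hKt, Submodule.top_smul]
      trivial
    rw [hhom, hKt, hNtop]
    exact tszeIdl_top_top
  by_cases hNtop : sndSub I = ⊤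
  · refine ⟨⊤, [tszeIdl (Ideal.map tszeFst I) ⊤], top_isInvertibleIdeal, by simp, ?_, ?_⟩
    · rintro H hH
      rw [List.mem_singleton] at hH
      subst hH
      exact ⟨tszeIdl_top_ne_top hKtop,
        tszeIdl_top_isRadical (vnr_ideal_isRadical hv _)⟩
    · rw [List.prod_singleton, Ideal.top_mul]
      conv_lhs => rw [hhom, hNtop]
  · have hQtopN : (Submodule.colon (sndSub I) ⊤) • (⊤ : Submodule A E) = sndSub I := by
      obtain ⟨I₁, hI₁⟩ := hmul (sndSub I)
      apply le_antisymm
      · rw [Submodule.smul_le]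
        intro r hr e _
        exact Submodule.mem_colon.mp hr e trivial
      · conv_lhs => rw [hI₁]
        refine Submodule.smul_mono ?_ le_rfl
        intro r hr
        rw [Submodule.mem_colon]
        intro p _
        rw [hI₁]
        exact Submodule.smul_mem_smul hr trivial
    have hQne : Submodule.colon (sndSub I) ⊤ ≠ ⊤ := by
      intro h
      apply hNtop
      rw [← hQtopN, h, Submodule.top_smul]
    have hKQ : Ideal.map tszeFst I ≤ Submodule.colon (sndSub I) ⊤ := by
      intro a ha
      rw [Submodule.mem_colon]
      intro p _
      exact hside (Submodule.smul_mem_smul ha trivial)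
    refine ⟨⊤, [tszeIdl (Ideal.map tszeFst I) ⊤, tszeIdl (Submodule.colon (sndSub I) ⊤) ⊤],
      top_isInvertibleIdeal, by simp, ?_, ?_⟩
    · rintro H hH
      simp only [List.mem_cons, List.mem_singleton, List.not_mem_nil, or_false] at hH
      rcases hH with rfl | rfl
      · exact ⟨tszeIdl_top_ne_top hKtop, tszeIdl_top_isRadical (vnr_ideal_isRadical hv _)⟩
      · exact ⟨tszeIdl_top_ne_top hQne, tszeIdl_top_isRadical (vnr_ideal_isRadical hv _)⟩
    · rw [List.prod_cons, List.prod_singleton, Ideal.top_mul,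
        tszeIdl_mul_tszeIdl le_top le_top]
      conv_lhs => rw [hhom]
      congr 1
      · exact le_antisymm (le_trans (vnr_le_sq hv _) (Ideal.mul_mono_right hKQ))
          Ideal.mul_le_left
      · rw [hQtopN]
        exact (sup_eq_right.mpr hside).symm

end ISPMain


/-- (1) If `A ∝ E` is a strongly ISP-ring then so is `A`.
(2) If `A` is von Neumann regular and `E` is a multiplication module then `A ∝ E` is a
strongly ISP-ring.
(3) If `A ∝ E` is a strongly ISP-ring and `E = sE` for every `s ∈ A ∖ (Z(A) ∪ Z(E))`,
then `E` is a multiplication module. -/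
theorem trivSqZeroExt_stronglyISPRing {A E : Type*} [CommRing A]
    [AddCommGroup E] [Module A E] [Module Aᵐᵒᵖ E] [IsCentralScalar A E] :
    (IsStronglyISPRing (TrivSqZeroExt A E) → IsStronglyISPRing A) ∧
      ((∀ a : A, ∃ b : A, a * b * a = a) →
        (∀ N : Submodule A E, ∃ I : Ideal A, N = I • (⊤ : Submodule A E)) →
        IsStronglyISPRing (TrivSqZeroExt A E)) ∧
      (IsStronglyISPRing (TrivSqZeroExt A E) →
        (∀ s : A, s ∈ nonZeroDivisors A → (∀ e : E, s • e = 0 → e = 0) →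
          ∀ e : E, ∃ e' : E, e = s • e') →
        ∀ N : Submodule A E, ∃ I : Ideal A, N = I • (⊤ : Submodule A E)) :=
  ⟨isp_part1, fun hv hm => isp_part2 hv hm, fun hR _ => isp_part3 hR⟩
end

section
/- Let A be a commutative ring and E an A-module such that the trivial ring extension A∝E is a strongly ISP-ring in which every prime ideal is maximal. Then for every maximal ideal M of A lying in the support of E (i.e., with E_M ≠ 0), the localization A_M is a field and E_M is isomorphic to A_M as an A_M-module. -/
open TrivSqZeroExt



section AuxRing

variable {B : Type*} [CommRing B]

/-- In a ring where every prime is maximal, for every maximal `m`, radical ideal `H`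
and `r ∈ m`, there is `v ∉ m` with `v * r ∈ H`. -/
lemma aux_key (hmax : ∀ P : Ideal B, P.IsPrime → P.IsMaximal)
    {m : Ideal B} (hm : m.IsMaximal) {H : Ideal B} (hH : H.IsRadical)
    {r : B} (hr : r ∈ m) : ∃ v, v ∉ m ∧ v * r ∈ H := by
  by_contra hcon
  push_neg at hcon
  have h1m : (1 : B) ∉ m := Ideal.ne_top_iff_one m |>.mp hm.ne_top
  let T : Submonoid B :=
    { carrier := {x | ∃ v, v ∉ m ∧ ∃ k : ℕ, x = v * r ^ k}
      one_mem' := ⟨1, h1m, 0, by ring⟩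
      mul_mem' := by
        rintro x y ⟨v, hv, k, rfl⟩ ⟨w, hw, l, rfl⟩
        refine ⟨v * w, fun hvw => ((hm.isPrime.mem_or_mem hvw).elim hv hw), k + l, by ring⟩ }
  have hdisj : Disjoint (H : Set B) (T : Set B) := by
    rw [Set.disjoint_left]
    rintro x hxH ⟨v, hv, k, rfl⟩
    rcases k with _ | n
    · have hvH : v ∈ H := by simpa using hxH
      exact hcon v hv (H.mul_mem_right r hvH)
    · have hpow : (v * r) ^ (n + 1) = v ^ n * (v * r ^ (n + 1)) := by ring
      have : (v * r) ^ (n + 1) ∈ H := by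
        rw [hpow]; exact H.mul_mem_left _ hxH
      exact hcon v hv (hH ⟨n + 1, this⟩)
  obtain ⟨P, hP, hHP, hPd⟩ := Ideal.exists_le_prime_disjoint H T hdisj
  have hPm : P ≤ m := by
    intro x hxP
    by_contra hxm
    exact Set.disjoint_left.mp hPd hxP ⟨x, hxm, 0, by ring⟩
  have hPeq : P = m := (hmax P hP).eq_of_le hm.ne_top hPm
  exact Set.disjoint_left.mp hPd (hPeq ▸ hr) ⟨1, h1m, 1, by ring⟩

/-- In a ring where every prime is maximal, every regular element is a unit. -/
lemma aux_regular_isUnit (hmax : ∀ P : Ideal B, P.IsPrime → P.IsMaximal)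
    {r : B} (hreg : r ∈ nonZeroDivisors B) : IsUnit r := by
  by_contra hu
  obtain ⟨m, hm, hrm⟩ := Ideal.exists_le_maximal (Ideal.span {r})
    (by rwa [Ne, Ideal.span_singleton_eq_top])
  have hrm' : r ∈ m := hrm (Ideal.mem_span_singleton_self r)
  obtain ⟨v, hv, hvr⟩ := aux_key hmax hm (Ideal.radical_isRadical (⊥ : Ideal B)) hrm'
  obtain ⟨k, hk⟩ := (mem_nilradical).mp hvr
  have hvk : v ^ k * r ^ k = 0 := by rw [← mul_pow]; exact hk
  have hv0 : v ^ k = 0 := (pow_mem hreg k).2 _ hvk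
  exact hv (hm.isPrime.mem_of_pow_mem k (by rw [hv0]; exact m.zero_mem))

lemma aux_list_prod_le_of_mem {L : List (Ideal B)} {I : Ideal B} (h : I ∈ L) :
    L.prod ≤ I := by
  induction L with
  | nil => simp at h
  | cons H L ih =>
    rw [List.prod_cons]
    rcases List.mem_cons.mp h with rfl | h'
    · exact Ideal.mul_le_left
    · exact le_trans Ideal.mul_le_right (ih h')

lemma aux_pow_length_le_prod {L : List (Ideal B)} {K : Ideal B} (h : ∀ I ∈ L, K ≤ I) :
    K ^ L.length ≤ L.prod := by
  induction L with
  | nil => simp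
  | cons H L ih =>
    rw [List.prod_cons, List.length_cons, pow_succ, mul_comm]
    exact Ideal.mul_mono (h H (List.mem_cons_self)) (ih fun I hI => h I (List.mem_cons_of_mem _ hI))

lemma aux_exists_le_of_prod_le_prime {P : Ideal B} (hP : P.IsPrime) :
    ∀ (L : List (Ideal B)), L.prod ≤ P → L = [] ∨ ∃ I ∈ L, I ≤ P := by
  intro L
  induction L with
  | nil => intro _; exact Or.inl rfl
  | cons H L ih =>
    intro h
    rw [List.prod_cons] at h
    rcases hP.mul_le.mp h with h' | h'
    · exact Or.inr ⟨H, List.mem_cons_self, h'⟩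
    · rcases ih h' with rfl | ⟨I, hI, hIP⟩
      · exact absurd (top_le_iff.mp (by simpa using h')) hP.ne_top
      · exact Or.inr ⟨I, List.mem_cons_of_mem _ hI, hIP⟩

lemma aux_prod_mem_list_prod {xs : List B} {Ls : List (Ideal B)}
    (h : List.Forall₂ (fun x I => x ∈ I) xs Ls) : xs.prod ∈ Ls.prod := by
  induction h with
  | nil => rw [List.prod_nil, List.prod_nil, Ideal.one_eq_top]; trivial
  | cons hx _ ih => rw [List.prod_cons, List.prod_cons]; exact Ideal.mul_mem_mul hx ih

lemma aux_map_list_prod {C : Type*} [CommRing C] (f : B →+* C) (L : List (Ideal B)) :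
    (L.map (Ideal.map f)).prod = Ideal.map f L.prod := by
  induction L with
  | nil => simp [Ideal.one_eq_top, Ideal.map_top]
  | cons H L ih => rw [List.map_cons, List.prod_cons, List.prod_cons, Ideal.map_mul, ih]

end AuxRing



section AuxTSZE

variable {A E : Type*} [CommRing A] [AddCommGroup E] [Module A E] [Module Aᵐᵒᵖ E]
  [IsCentralScalar A E]

/-- The "first component" of an ideal of `A ∝ E`. -/
def barI (H : Ideal (TrivSqZeroExt A E)) : Ideal A :=
  H.comap (TrivSqZeroExt.inlHom A E)

lemma mem_barI {H : Ideal (TrivSqZeroExt A E)} {a : A} :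
    a ∈ barI H ↔ (inl a : TrivSqZeroExt A E) ∈ H := Iff.rfl

lemma inr_mem_of_isRadical {H : Ideal (TrivSqZeroExt A E)} (hH : H.IsRadical) (f : E) :
    (inr f : TrivSqZeroExt A E) ∈ H := by
  refine hH ⟨2, ?_⟩
  rw [sq, inr_mul_inr]
  exact H.zero_mem

lemma fst_mem_barI {H : Ideal (TrivSqZeroExt A E)} (hH : ∀ f : E, (inr f : TrivSqZeroExt A E) ∈ H)
    {x : TrivSqZeroExt A E} (hx : x ∈ H) : x.fst ∈ barI H := by
  rw [mem_barI]
  have : (inl x.fst : TrivSqZeroExt A E) = x - inr x.snd := by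
    rw [eq_sub_iff_add_eq, inl_fst_add_inr_snd_eq]
  rw [this]
  exact H.sub_mem hx (hH _)

lemma barI_isRadical {H : Ideal (TrivSqZeroExt A E)} (hH : H.IsRadical) :
    (barI H).IsRadical := by
  rintro a ⟨n, hn⟩
  rw [mem_barI]
  refine hH ⟨n, ?_⟩
  have hn' := mem_barI.mp hn
  rw [← TrivSqZeroExt.inlHom_apply, ← map_pow]
  exact hn'

lemma barI_ne_top {H : Ideal (TrivSqZeroExt A E)} (hH : H ≠ ⊤) : barI H ≠ ⊤ := by
  intro h
  apply hH
  rw [Ideal.eq_top_iff_one] at h ⊢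
  simpa [mem_barI] using h

lemma inl_mem_of_mem_prod_barI :
    ∀ (L : List (Ideal (TrivSqZeroExt A E))) (a : A), a ∈ (L.map barI).prod →
      (inl a : TrivSqZeroExt A E) ∈ L.prod := by
  intro L
  induction L with
  | nil => intro a _; rw [List.prod_nil, Ideal.one_eq_top]; trivial
  | cons H L ih =>
    intro a ha
    rw [List.map_cons, List.prod_cons] at ha
    rw [List.prod_cons]
    refine Submodule.mul_induction_on ha (fun b hb c hc => ?_) (fun x y hx hy => ?_)
    · rw [inl_mul]
      exact Ideal.mul_mem_mul hb (ih c hc)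
    · rw [inl_add]
      exact Submodule.add_mem _ hx hy

/-- The second-component bound for products of ideals containing `0 ∝ E`. -/
def GG : List (Ideal (TrivSqZeroExt A E)) → Submodule A E
  | [] => ⊤
  | H :: L => ((L.map barI).prod • (⊤ : Submodule A E)) ⊔ (barI H • GG L)

lemma mem_prod_fst_snd :
    ∀ (L : List (Ideal (TrivSqZeroExt A E))),
      (∀ H ∈ L, ∀ f : E, (inr f : TrivSqZeroExt A E) ∈ H) →
      ∀ x ∈ L.prod, x.fst ∈ (L.map barI).prod ∧ x.snd ∈ GG L := by
  intro L
  induction L with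
  | nil =>
    intro _ x _
    constructor
    · rw [List.map_nil, List.prod_nil, Ideal.one_eq_top]; trivial
    · trivial
  | cons H L ih =>
    intro hL x hx
    rw [List.prod_cons] at hx
    refine Submodule.mul_induction_on hx (fun h hh y hy => ?_) (fun a b ha hb => ?_)
    · have hfst : h.fst ∈ barI H :=
        fst_mem_barI (hL H (List.mem_cons_self)) hh
      obtain ⟨hy1, hy2⟩ := ih (fun H' h' f => hL H' (List.mem_cons_of_mem _ h') f) y hy
      constructor
      · rw [List.map_cons, List.prod_cons]
        exact Ideal.mul_mem_mul hfst hy1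
      · show (h * y).snd ∈ GG (H :: L)
        rw [snd_mul]
        refine Submodule.add_mem _ ?_ ?_
        · exact Submodule.mem_sup_right (Submodule.smul_mem_smul hfst hy2)
        · rw [op_smul_eq_smul]
          exact Submodule.mem_sup_left (Submodule.smul_mem_smul hy1 trivial)
    · exact ⟨by rw [fst_add]; exact Submodule.add_mem _ ha.1 hb.1,
        by rw [snd_add]; exact Submodule.add_mem _ ha.2 hb.2⟩

lemma GG_le {M : Ideal A} :
    ∀ (L₁ : List (Ideal (TrivSqZeroExt A E))) (H₀ : Ideal (TrivSqZeroExt A E))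
      (L₂ : List (Ideal (TrivSqZeroExt A E))), barI H₀ ≤ M →
      (∃ H' ∈ L₁ ++ L₂, barI H' ≤ M) →
      GG (L₁ ++ H₀ :: L₂) ≤ M • (⊤ : Submodule A E) := by
  intro L₁
  induction L₁ with
  | nil =>
    intro H₀ L₂ h0 hex
    obtain ⟨H', hH', hle⟩ := hex
    rw [List.nil_append] at hH' ⊢
    show ((L₂.map barI).prod • (⊤ : Submodule A E)) ⊔ (barI H₀ • GG L₂) ≤ _
    refine sup_le ?_ ?_
    · refine Submodule.smul_mono ?_ le_top
      exact le_trans (aux_list_prod_le_of_mem (List.mem_map_of_mem (f := barI) hH')) hle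
    · exact Submodule.smul_mono h0 le_top
  | cons H L₁ ih =>
    intro H₀ L₂ h0 hex
    rw [List.cons_append]
    show (((L₁ ++ H₀ :: L₂).map barI).prod • (⊤ : Submodule A E)) ⊔
      (barI H • GG (L₁ ++ H₀ :: L₂)) ≤ _
    refine sup_le ?_ ?_
    · refine Submodule.smul_mono ?_ le_top
      refine le_trans (aux_list_prod_le_of_mem (List.mem_map_of_mem (f := barI) ?_)) h0
      exact List.mem_append.mpr (Or.inr (List.mem_cons_self))
    · obtain ⟨H', hH', hle⟩ := hex
      rw [List.cons_append, List.mem_cons] at hH'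
      rcases hH' with rfl | hH'
      · exact le_trans (Submodule.smul_mono hle le_top) le_rfl
      · refine le_trans (Submodule.smul_mono le_rfl (ih H₀ L₂ h0 ⟨H', hH', hle⟩)) ?_
        exact Submodule.smul_le_right

/-- `fst` as a ring hom. -/
def fstRingHom : TrivSqZeroExt A E →+* A where
  toFun := TrivSqZeroExt.fst
  map_one' := rfl
  map_mul' := fun _ _ => rfl
  map_zero' := rfl
  map_add' := fun _ _ => rfl

lemma fstRingHom_apply (x : TrivSqZeroExt A E) : fstRingHom x = x.fst := rfl

end AuxTSZE


/-- If `A ∝ E` is a strongly ISP-ring in which every prime ideal is maximal, then for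
every maximal ideal `M` of `A` in the support of `E`, the localization `A_M` is a field
and `E_M ≅ A_M`. -/
theorem field_localization_of_trivSqZeroExt_stronglyISPRing {A E : Type*} [CommRing A]
    [AddCommGroup E] [Module A E] [Module Aᵐᵒᵖ E] [IsCentralScalar A E]
    (hisp : IsStronglyISPRing (TrivSqZeroExt A E))
    (hmax : ∀ P : Ideal (TrivSqZeroExt A E), P.IsPrime → P.IsMaximal)
    (M : Ideal A) (hM : M.IsMaximal)
    (hsupp : ∃ x : LocalizedModule (@Ideal.primeCompl A _ M hM.isPrime) E, x ≠ 0) :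
    IsField (Localization (@Ideal.primeCompl A _ M hM.isPrime)) ∧
      Nonempty (LocalizedModule (@Ideal.primeCompl A _ M hM.isPrime) E ≃ₗ[Localization
          (@Ideal.primeCompl A _ M hM.isPrime)]
        Localization (@Ideal.primeCompl A _ M hM.isPrime)) := by
  classical
  haveI := hM.isPrime
  haveI : Nontrivial A :=
    nontrivial_of_ne 1 0 fun h => hM.ne_top (Ideal.eq_top_iff_one M |>.mpr (h ▸ M.zero_mem))
  -- every prime of A is maximal
  have hmaxA : ∀ P : Ideal A, P.IsPrime → P.IsMaximal := by
    intro P hP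
    have hQ : (P.comap (fstRingHom (A := A) (E := E))).IsPrime := Ideal.comap_isPrime _ _
    have hQmax := hmax _ hQ
    rw [Ideal.isMaximal_iff]
    refine ⟨Ideal.ne_top_iff_one P |>.mp hP.ne_top, ?_⟩
    intro I b hPI hbP hbI
    have hbQ : (inl b : TrivSqZeroExt A E) ∉ P.comap (fstRingHom (A := A) (E := E)) := by
      simpa [Ideal.mem_comap, fstRingHom_apply] using hbP
    obtain ⟨c, i, hiQ, hci⟩ := hQmax.exists_inv hbQ
    have hci' := congrArg (fstRingHom (A := A) (E := E)) hci
    rw [map_add, map_mul, map_one] at hci'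
    rw [Ideal.mem_comap] at hiQ
    have hfb : (fstRingHom (A := A) (E := E)) (inl b) = b := by
      simp [fstRingHom_apply]
    rw [hfb] at hci'
    rw [← hci']
    exact I.add_mem (I.mul_mem_left _ hbI) (hPI hiQ)
  -- proper ideals generated by inr e
  have hproper : ∀ e : E, Ideal.span {(inr e : TrivSqZeroExt A E)} ≠ ⊤ := by
    intro e htop
    obtain ⟨r, hr⟩ := Ideal.mem_span_singleton'.mp (Ideal.eq_top_iff_one _ |>.mp htop)
    have h0 := congrArg TrivSqZeroExt.fst hr
    rw [fst_mul, fst_inr, mul_zero, fst_one] at h0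
    exact zero_ne_one h0
  -- factorizations
  have hfact : ∀ e : E, ∃ L : List (Ideal (TrivSqZeroExt A E)), L ≠ [] ∧
      (∀ H ∈ L, H ≠ ⊤ ∧ H.IsRadical) ∧
      Ideal.span {(inr e : TrivSqZeroExt A E)} = L.prod := by
    intro e
    obtain ⟨J, L, hJ, hL0, hLr, hprod⟩ := hisp _ (hproper e)
    obtain ⟨⟨a, haJ, hareg⟩, -, -⟩ := hJ
    have hJtop : J = ⊤ := Ideal.eq_top_of_isUnit_mem _ haJ (aux_regular_isUnit hmax hareg)
    rw [hJtop, ← Ideal.one_eq_top, one_mul] at hprod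
    exact ⟨L, hL0, hLr, hprod⟩
  -- the product of the first components is zero
  have hbar0 : ∀ (e : E) (L : List (Ideal (TrivSqZeroExt A E))),
      Ideal.span {(inr e : TrivSqZeroExt A E)} = L.prod → (L.map barI).prod = ⊥ := by
    intro e L hprod
    rw [eq_bot_iff]
    intro a ha
    have h1 : (inl a : TrivSqZeroExt A E) ∈ L.prod := inl_mem_of_mem_prod_barI L a ha
    rw [← hprod] at h1
    obtain ⟨r, hr⟩ := Ideal.mem_span_singleton'.mp h1
    have h0 := congrArg TrivSqZeroExt.fst hr
    rw [fst_mul, fst_inr, mul_zero, fst_inl] at h0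
    rw [Ideal.mem_bot]
    exact h0.symm
  -- localized image of M is inside localized image of any radical ideal
  have hMap_le : ∀ (Hb : Ideal A), Hb.IsRadical →
      M.map (algebraMap A (Localization M.primeCompl)) ≤
        Hb.map (algebraMap A (Localization M.primeCompl)) := by
    intro Hb hrad
    rw [Ideal.map_le_iff_le_comap]
    intro m hm
    rw [Ideal.mem_comap]
    obtain ⟨v, hv, hvm⟩ := aux_key hmaxA hM hrad hm
    have h1 : algebraMap A (Localization M.primeCompl) (v * m) ∈
        Hb.map (algebraMap A (Localization M.primeCompl)) := Ideal.mem_map_of_mem _ hvm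
    rw [map_mul] at h1
    have hu : IsUnit (algebraMap A (Localization M.primeCompl) v) :=
      IsLocalization.map_units _ (⟨v, hv⟩ : M.primeCompl)
    exact (Ideal.unit_mul_mem_iff_mem _ hu).mp h1
  obtain ⟨x₀, hx₀⟩ := hsupp
  obtain ⟨e₀, s₀, rfl⟩ : ∃ (f : E) (s : M.primeCompl), x₀ = LocalizedModule.mk f s := by
    induction x₀ using LocalizedModule.induction_on with | h f s => exact ⟨f, s, rfl⟩
  have he₀ : LocalizedModule.mk e₀ (1 : M.primeCompl) ≠ 0 := by
    intro h
    apply hx₀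
    rw [show LocalizedModule.mk e₀ s₀ = Localization.mk 1 s₀ • LocalizedModule.mk e₀ 1 by
      rw [LocalizedModule.mk_smul_mk, one_smul, mul_one], h, smul_zero]
  -- N ≠ ⊤
  have hNtop : (M.map (algebraMap A (Localization M.primeCompl))) •
      (⊤ : Submodule (Localization M.primeCompl) (LocalizedModule M.primeCompl E)) ≠ ⊤ := by
    intro hNt
    obtain ⟨L₀, hL0ne, hL0r, hprod0⟩ := hfact e₀
    have hb0 := hbar0 e₀ L₀ hprod0
    have hPn : (M.map (algebraMap A (Localization M.primeCompl))) ^ L₀.length = ⊥ := by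
      have h1 : (M.map (algebraMap A (Localization M.primeCompl))) ^ L₀.length ≤
          ((L₀.map barI).map (Ideal.map (algebraMap A (Localization M.primeCompl)))).prod := by
        have hlen : (((L₀.map barI).map
            (Ideal.map (algebraMap A (Localization M.primeCompl))))).length = L₀.length := by
          simp
        rw [← hlen]
        apply aux_pow_length_le_prod
        intro I hI
        obtain ⟨Hb, hHb, rfl⟩ := List.mem_map.mp hI
        obtain ⟨H, hH, rfl⟩ := List.mem_map.mp hHb
        exact hMap_le _ (barI_isRadical (hL0r H hH).2)
      rw [aux_map_list_prod, hb0, Ideal.map_bot] at h1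
      exact le_bot_iff.mp h1
    have hk : ∀ k : ℕ, (M.map (algebraMap A (Localization M.primeCompl))) ^ k •
        (⊤ : Submodule (Localization M.primeCompl) (LocalizedModule M.primeCompl E)) = ⊤ := by
      intro k
      induction k with
      | zero => rw [pow_zero, Ideal.one_eq_top, Submodule.top_smul]
      | succ k ih =>
        rw [pow_succ, ← Ideal.smul_eq_mul, Submodule.smul_assoc, hNt, ih]
    have hbt : (⊤ : Submodule (Localization M.primeCompl) (LocalizedModule M.primeCompl E)) = ⊥ := by
      rw [← hk L₀.length, hPn, Submodule.bot_smul]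
    exact he₀ ((Submodule.mem_bot _).mp (hbt ▸ Submodule.mem_top))
  -- choose a good element e
  obtain ⟨y, hy⟩ : ∃ y : LocalizedModule M.primeCompl E,
      y ∉ (M.map (algebraMap A (Localization M.primeCompl))) •
        (⊤ : Submodule (Localization M.primeCompl) (LocalizedModule M.primeCompl E)) := by
    by_contra h
    push_neg at h
    exact hNtop (Submodule.eq_top_iff'.mpr h)
  obtain ⟨e, s, rfl⟩ : ∃ (f : E) (s : M.primeCompl), y = LocalizedModule.mk f s := by
    induction y using LocalizedModule.induction_on with | h f s => exact ⟨f, s, rfl⟩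
  have hmem : LocalizedModule.mk e (1 : M.primeCompl) ∉
      (M.map (algebraMap A (Localization M.primeCompl))) •
        (⊤ : Submodule (Localization M.primeCompl) (LocalizedModule M.primeCompl E)) := by
    intro h
    apply hy
    rw [show LocalizedModule.mk e s = Localization.mk 1 s • LocalizedModule.mk e 1 by
      rw [LocalizedModule.mk_smul_mk, one_smul, mul_one]]
    exact Submodule.smul_mem _ _ h
  -- factor the ideal generated by inr e
  obtain ⟨L, hLne, hLr, hprod⟩ := hfact e
  have hinr : ∀ H ∈ L, ∀ f : E, (inr f : TrivSqZeroExt A E) ∈ H :=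
    fun H hH f => inr_mem_of_isRadical (hLr H hH).2 f
  have hb := hbar0 e L hprod
  obtain ⟨H₀, hH₀L, hH₀M⟩ : ∃ H₀ ∈ L, barI H₀ ≤ M := by
    rcases aux_exists_le_of_prod_le_prime hM.isPrime (L.map barI)
        (by rw [hb]; exact bot_le) with hnil | ⟨I, hI, hIM⟩
    · exact absurd (List.map_eq_nil_iff.mp hnil) hLne
    · obtain ⟨H₀, hH₀, rfl⟩ := List.mem_map.mp hI
      exact ⟨H₀, hH₀, hIM⟩
  obtain ⟨L₁, L₂, rfl⟩ := List.append_of_mem hH₀L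
  by_cases hB : ∃ H' ∈ L₁ ++ L₂, barI H' ≤ M
  · exfalso
    have hin : (inr e : TrivSqZeroExt A E) ∈ (L₁ ++ H₀ :: L₂).prod := by
      rw [← hprod]; exact Ideal.subset_span rfl
    have hsnd := (mem_prod_fst_snd _ hinr (inr e) hin).2
    have hGG : GG (L₁ ++ H₀ :: L₂) ≤ M • (⊤ : Submodule A E) := GG_le L₁ H₀ L₂ hH₀M hB
    have heM : e ∈ M • (⊤ : Submodule A E) := by
      have hse : (inr e : TrivSqZeroExt A E).snd = e := snd_inr A e
      exact hGG (hse ▸ hsnd)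
    refine hmem (Submodule.smul_induction_on heM (fun m hm g hg => ?_) (fun a b ha hb' => ?_))
    · rw [show LocalizedModule.mk (m • g) (1 : M.primeCompl) =
          Localization.mk m 1 • LocalizedModule.mk g 1 by
        rw [LocalizedModule.mk_smul_mk, one_mul], Localization.mk_one_eq_algebraMap]
      exact Submodule.smul_mem_smul (Ideal.mem_map_of_mem _ hm) trivial
    · rw [show LocalizedModule.mk (a + b) (1 : M.primeCompl) =
          LocalizedModule.mk a 1 + LocalizedModule.mk b 1 by
        rw [LocalizedModule.mk_add_mk]; simp]
      exact Submodule.add_mem _ ha hb'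
  · push_neg at hB
    set g : Ideal (TrivSqZeroExt A E) → A := fun H =>
      if h : barI H ≤ M then 1 else (SetLike.not_le_iff_exists.mp h).choose with hgdef
    have hgspec : ∀ H : Ideal (TrivSqZeroExt A E), ¬ barI H ≤ M → g H ∈ barI H ∧ g H ∉ M := by
      intro H h
      rw [hgdef]
      simp only [dif_neg h]
      exact (SetLike.not_le_iff_exists.mp h).choose_spec
    have key2 : ∀ l : List (Ideal (TrivSqZeroExt A E)), (∀ H ∈ l, ¬ barI H ≤ M) →
        ((l.map g).prod ∉ M ∧ (l.map g).prod ∈ (l.map barI).prod ∧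
          (inl ((l.map g).prod) : TrivSqZeroExt A E) ∈ l.prod) := by
      intro l hl
      induction l with
      | nil =>
        refine ⟨Ideal.ne_top_iff_one M |>.mp hM.ne_top, ?_, ?_⟩
        · rw [List.map_nil, List.map_nil, List.prod_nil, Ideal.one_eq_top]; trivial
        · rw [List.map_nil, List.prod_nil, List.prod_nil, inl_one, Ideal.one_eq_top]; trivial
      | cons H l ih =>
        have hH := hgspec H (hl H (List.mem_cons_self))
        obtain ⟨ih1, ih2, ih3⟩ := ih fun H' h' => hl H' (List.mem_cons_of_mem _ h')
        refine ⟨?_, ?_, ?_⟩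
        · rw [List.map_cons, List.prod_cons]
          intro hmem'
          rcases hM.isPrime.mem_or_mem hmem' with h | h
          · exact hH.2 h
          · exact ih1 h
        · rw [List.map_cons, List.prod_cons, List.map_cons, List.prod_cons]
          exact Ideal.mul_mem_mul hH.1 ih2
        · rw [List.map_cons, List.prod_cons, List.prod_cons, inl_mul]
          exact Ideal.mul_mem_mul (mem_barI.mp hH.1) ih3
    obtain ⟨h₁notM, h₁mem, h₁inl⟩ := key2 L₁ fun H' h' =>
      hB H' (List.mem_append.mpr (Or.inl h'))
    obtain ⟨h₂notM, h₂mem, h₂inl⟩ := key2 L₂ fun H' h' =>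
      hB H' (List.mem_append.mpr (Or.inr h'))
    have htM : (L₁.map g).prod * (L₂.map g).prod ∉ M := fun h =>
      (hM.isPrime.mem_or_mem h).elim h₁notM h₂notM
    -- the field part
    have hM0 : ∀ m ∈ M, algebraMap A (Localization M.primeCompl) m = 0 := by
      intro m hm
      obtain ⟨v, hv, hvm⟩ := aux_key hmaxA hM (barI_isRadical (hLr H₀ hH₀L).2) hm
      have htbar : (L₁.map g).prod * (L₂.map g).prod ∈
          (L₁.map barI).prod * (L₂.map barI).prod := Ideal.mul_mem_mul h₁mem h₂mem
      have h1 : (v * m) * ((L₁.map g).prod * (L₂.map g).prod) ∈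
          (barI H₀) * ((L₁.map barI).prod * (L₂.map barI).prod) :=
        Ideal.mul_mem_mul hvm htbar
      have h2 : (barI H₀) * ((L₁.map barI).prod * (L₂.map barI).prod) =
          (((L₁ ++ H₀ :: L₂).map barI)).prod := by
        rw [List.map_append, List.prod_append, List.map_cons, List.prod_cons]
        ring
      rw [h2, hb] at h1
      have h3 : (v * m) * ((L₁.map g).prod * (L₂.map g).prod) = 0 := Ideal.mem_bot.mp h1
      rw [IsLocalization.map_eq_zero_iff M.primeCompl]
      refine ⟨⟨v * ((L₁.map g).prod * (L₂.map g).prod), fun hc => ?_⟩, ?_⟩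
      · exact (hM.isPrime.mem_or_mem hc).elim hv htM
      · rw [show v * ((L₁.map g).prod * (L₂.map g).prod) * m =
          (v * m) * ((L₁.map g).prod * (L₂.map g).prod) by ring, h3]
    have hfield : IsField (Localization M.primeCompl) := by
      rw [IsLocalRing.isField_iff_maximalIdeal_eq, ← Localization.AtPrime.map_eq_maximalIdeal,
        eq_bot_iff, Ideal.map_le_iff_le_comap]
      intro m hm
      rw [Ideal.mem_comap, Ideal.mem_bot]
      exact hM0 m hm
    -- surjectivity data
    have hsurj : ∀ y : LocalizedModule M.primeCompl E, ∃ c : Localization M.primeCompl,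
        c • LocalizedModule.mk e (1 : M.primeCompl) = y := by
      intro y
      obtain ⟨f, s', rfl⟩ : ∃ (f : E) (s' : M.primeCompl), y = LocalizedModule.mk f s' := by
        induction y using LocalizedModule.induction_on with | h f s' => exact ⟨f, s', rfl⟩
      have hmemprod : (inr (((L₁.map g).prod * (L₂.map g).prod) • f) : TrivSqZeroExt A E) ∈
          (L₁ ++ H₀ :: L₂).prod := by
        have hcalc : (inl ((L₁.map g).prod) : TrivSqZeroExt A E) *
            ((inr f : TrivSqZeroExt A E) * inl ((L₂.map g).prod)) =
            inr (((L₁.map g).prod * (L₂.map g).prod) • f) := by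
          rw [inr_mul_inl, inl_mul_inr, op_smul_eq_smul, smul_smul]
        rw [List.prod_append, List.prod_cons, ← hcalc]
        exact Ideal.mul_mem_mul h₁inl
          (Ideal.mul_mem_mul (inr_mem_of_isRadical (hLr H₀ hH₀L).2 f) h₂inl)
      rw [← hprod] at hmemprod
      obtain ⟨r, hr⟩ := Ideal.mem_span_singleton'.mp hmemprod
      have hsnd : r.fst • e = ((L₁.map g).prod * (L₂.map g).prod) • f := by
        have h4 := congrArg TrivSqZeroExt.snd hr
        rw [snd_mul, snd_inr, fst_inr] at h4
        simpa [op_smul_eq_smul] using h4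
      refine ⟨Localization.mk r.fst (⟨(L₁.map g).prod * (L₂.map g).prod, htM⟩ * s'), ?_⟩
      rw [LocalizedModule.mk_smul_mk, mul_one, hsnd,
        show ((L₁.map g).prod * (L₂.map g).prod) • f =
          ((⟨(L₁.map g).prod * (L₂.map g).prod, htM⟩ : M.primeCompl)) • f from rfl,
        LocalizedModule.mk_cancel_common_left]
    have hx0 : LocalizedModule.mk e (1 : M.primeCompl) ≠ 0 := fun h =>
      hmem (by rw [h]; exact Submodule.zero_mem _)
    have hinj : Function.Injective (LinearMap.toSpanSingleton (Localization M.primeCompl)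
        (LocalizedModule M.primeCompl E) (LocalizedModule.mk e 1)) := by
      rw [injective_iff_map_eq_zero]
      intro c hc
      rw [LinearMap.toSpanSingleton_apply] at hc
      by_contra hc0
      obtain ⟨d, hd⟩ := hfield.mul_inv_cancel hc0
      apply hx0
      calc LocalizedModule.mk e (1 : M.primeCompl)
          = (1 : Localization M.primeCompl) • LocalizedModule.mk e 1 := (one_smul _ _).symm
        _ = (d * c) • LocalizedModule.mk e (1 : M.primeCompl) := by rw [mul_comm d c, hd]
        _ = d • (c • LocalizedModule.mk e (1 : M.primeCompl)) := mul_smul _ _ _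
        _ = 0 := by rw [hc, smul_zero]
    have hsurj' : Function.Surjective (LinearMap.toSpanSingleton (Localization M.primeCompl)
        (LocalizedModule M.primeCompl E) (LocalizedModule.mk e 1)) := by
      intro y
      obtain ⟨c, hc⟩ := hsurj y
      exact ⟨c, by rw [LinearMap.toSpanSingleton_apply]; exact hc⟩
    exact ⟨hfield, ⟨(LinearEquiv.ofBijective _ ⟨hinj, hsurj'⟩).symm⟩⟩
end

section
/- Let A be a commutative ring and I an ideal of A. (1) If the amalgamated duplication A⋈I is a strongly ISP-ring, then A is a strongly ISP-ring. (2) If I is a finitely generated idempotent ideal of A (I² = I), then A⋈I is a strongly ISP-ring if and only if A is a strongly ISP-ring. -/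
/-- The amalgamated duplication `A ⋈ I` of a ring `A` along an ideal `I`, realized as
the subring `{(a, a + i) : a ∈ A, i ∈ I}` of `A × A`. -/
def AmalgDup {A : Type*} [CommRing A] (I : Ideal A) : Subring (A × A) where
  carrier := {p | p.2 - p.1 ∈ I}
  zero_mem' := by simp
  one_mem' := by simp
  add_mem' := by
    intro a b ha hb
    show (a + b).2 - (a + b).1 ∈ I
    have h : (a + b).2 - (a + b).1 = (a.2 - a.1) + (b.2 - b.1) := by
      simp; ring
    rw [h]; exact I.add_mem ha hb
  neg_mem' := by
    intro a ha
    show (-a).2 - (-a).1 ∈ I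
    have h : (-a).2 - (-a).1 = -(a.2 - a.1) := by
      simp only [Prod.fst_neg, Prod.snd_neg]; ring
    rw [h]; exact I.neg_mem ha
  mul_mem' := by
    intro a b ha hb
    show (a * b).2 - (a * b).1 ∈ I
    have h : (a * b).2 - (a * b).1 = a.2 * (b.2 - b.1) + (a.2 - a.1) * b.1 := by
      simp; ring
    rw [h]
    exact I.add_mem (I.mul_mem_left _ hb) (I.mul_mem_right _ ha)

/-- The ideal `H ⋈ I = {(h, h + i) : h ∈ H, i ∈ I}` of the amalgamated duplication `A ⋈ I`. -/
def Ideal.amalgDup {A : Type*} [CommRing A] (H I : Ideal A) : Ideal (AmalgDup I) where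
  carrier := {x | (x : A × A).1 ∈ H}
  zero_mem' := H.zero_mem
  add_mem' := fun ha hb => H.add_mem ha hb
  smul_mem' := fun c x hx => by
    show ((c * x : AmalgDup I) : A × A).1 ∈ H
    push_cast
    exact H.mul_mem_left _ hx

/-!
Both implications are transfer arguments. An ISP factorization `J · H₁ ⋯ Hₙ` of `f⁻¹ K`
pushes forward along a surjection `f : R → S` that preserves regular elements: each `Hᵢ`
contains `ker f`, so its image stays proper and radical, and the localization of `J S` at `N`
is a further localization of `J` at `f⁻¹ N`. The projection `A ⋈ I → A` is such a surjection,
which gives (1). For (2), a finitely generated idempotent ideal is `I = (e)` with `e² = e`, and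
`A ⋈ (e) ≅ A × A/(1 - e)`. The quotient `A/(1 - e)` is again a regular-element-preserving
image of `A`, and factorizations in the two components of a product multiply together, since
every maximal ideal of `R × S` is `M × S` or `R × M` and the localization there only sees one
factor.
-/

section

variable {R S : Type*} [CommRing R] [CommRing S]

open Ideal

attribute [local instance] Ideal.isPrime_ideal_prod_top

theorem Ideal.isInvertibleIdeal_top : (⊤ : Ideal R).IsInvertibleIdeal := by
  refine ⟨⟨1, trivial, one_mem _⟩, ⟨{1}, by simp⟩, fun M _ => ?_⟩
  rw [Ideal.map_top]
  exact ⟨⟨1, Ideal.span_singleton_one.symm⟩⟩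

theorem Ideal.isPrincipal_map_of_isUnit {P : Ideal R} [P.IsPrime] {J : Ideal R}
    (hJ : (J.map (algebraMap R (Localization.AtPrime P))).IsPrincipal) (g : R →+* S)
    (hg : ∀ s : P.primeCompl, IsUnit (g s)) : (J.map g).IsPrincipal := by
  rw [← IsLocalization.lift_comp (S := Localization.AtPrime P) hg, ← Ideal.map_map]
  exact hJ.map_ringHom _

theorem Ideal.IsInvertibleIdeal.map_of_surjective {J : Ideal R} (hJ : J.IsInvertibleIdeal)
    {f : R →+* S} (hf : Function.Surjective f)
    (hreg : ∀ x ∈ nonZeroDivisors R, f x ∈ nonZeroDivisors S) :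
    (J.map f).IsInvertibleIdeal := by
  obtain ⟨⟨x, hxJ, hx⟩, hfg, hloc⟩ := hJ
  refine ⟨⟨f x, mem_map_of_mem f hxJ, hreg x hx⟩, hfg.map f, fun N hN => ?_⟩
  have := comap_isMaximal_of_surjective f hf (K := N)
  rw [Ideal.map_map]
  exact isPrincipal_map_of_isUnit (hloc _ this) _
    fun s => IsLocalization.map_units (M := N.primeCompl) _ ⟨f s, s.2⟩

theorem Ideal.prod_mul_prod (I₁ I₂ : Ideal R) (J₁ J₂ : Ideal S) :
    prod I₁ J₁ * prod I₂ J₂ = prod (I₁ * I₂) (J₁ * J₂) := by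
  rw [ideal_prod_eq (prod I₁ J₁ * prod I₂ J₂), Ideal.map_mul, Ideal.map_mul]
  simp only [map_fst_prod, map_snd_prod]

theorem Ideal.list_prod_map_prod_top (L : List (Ideal R)) :
    (L.map (prod · (⊤ : Ideal S))).prod = prod L.prod ⊤ := by
  induction L with
  | nil => simp [one_eq_top]
  | cons H L ih => simp [ih, prod_mul_prod]

theorem Ideal.list_prod_map_top_prod (L : List (Ideal S)) :
    (L.map (prod (⊤ : Ideal R) ·)).prod = prod ⊤ L.prod := by
  induction L with
  | nil => simp [one_eq_top]
  | cons H L ih => simp [ih, prod_mul_prod]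

theorem Ideal.FG.prod {I : Ideal R} {J : Ideal S} (hI : I.FG) (hJ : J.FG) : (prod I J).FG := by
  obtain ⟨s, rfl⟩ := hI
  obtain ⟨t, rfl⟩ := hJ
  classical
  refine ⟨insert 0 s ×ˢ insert 0 t, ?_⟩
  rw [Finset.coe_product, Finset.coe_insert, Finset.coe_insert,
    span_prod (by simp), span_insert_zero, span_insert_zero]

theorem Ideal.IsRadical.prod {I : Ideal R} {J : Ideal S} (hI : I.IsRadical) (hJ : J.IsRadical) :
    (prod I J).IsRadical := fun _ ⟨n, hxn⟩ =>
  ⟨hI ⟨n, hxn.1⟩, hJ ⟨n, hxn.2⟩⟩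

theorem Prod.mk_mem_nonZeroDivisors {r : R} {s : S} (hr : r ∈ nonZeroDivisors R)
    (hs : s ∈ nonZeroDivisors S) : (r, s) ∈ nonZeroDivisors (R × S) := by
  rw [mem_nonZeroDivisors_iff_right] at hr hs ⊢
  exact fun z hz => Prod.ext (hr z.1 (congrArg Prod.fst hz)) (hs z.2 (congrArg Prod.snd hz))

theorem Ideal.isPrincipal_map_atPrime_prod_top {P : Ideal R} [P.IsPrime] {J₁ : Ideal R}
    (h : (J₁.map (algebraMap R (Localization.AtPrime P))).IsPrincipal) (J₂ : Ideal S) :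
    ((prod J₁ J₂).map
      (algebraMap (R × S) (Localization.AtPrime (prod P (⊤ : Ideal S))))).IsPrincipal := by
  let := (RingHom.fst R S).toAlgebra
  set φ := algebraMap (R × S) (Localization.AtPrime (prod P (⊤ : Ideal S)))
  have hunit {r : R × S} (hr : r.1 ∉ P) : IsUnit (φ r) :=
    IsLocalization.map_units (M := (prod P ⊤).primeCompl) _
      ⟨r, show r ∉ prod P ⊤ from fun h => hr h.1⟩
  -- `R` is the localization of `R × S` away from the idempotent `(1, 0)`.
  let g : R →+* _ := IsLocalization.Away.lift (S := R) (1, 0)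
    (hunit (r := (1, 0)) ((ne_top_iff_one P).mp ‹P.IsPrime›.ne_top))
  have hg : g.comp (RingHom.fst R S) = φ := IsLocalization.Away.lift_comp _ _
  rw [← hg, ← Ideal.map_map, map_fst_prod]
  exact isPrincipal_map_of_isUnit h g fun s => by
    simpa [← hg] using hunit (r := ((s : R), (1 : S))) s.2

theorem Ideal.IsMaximal.of_prod_top {P : Ideal R} (h : (prod P (⊤ : Ideal S)).IsMaximal) :
    P.IsMaximal := by
  simpa using h.map_of_surjective_of_ker_le (f := RingHom.fst R S) Prod.fst_surjective
    fun _ hx => (mem_prod P ⊤).mpr ⟨by simp_all [RingHom.mem_ker], trivial⟩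

theorem Ideal.IsInvertibleIdeal.prod {J₁ : Ideal R} {J₂ : Ideal S} (h₁ : J₁.IsInvertibleIdeal)
    (h₂ : J₂.IsInvertibleIdeal) : (Ideal.prod J₁ J₂).IsInvertibleIdeal := by
  obtain ⟨⟨r₁, hr₁J, hr₁⟩, hfg₁, hloc₁⟩ := h₁
  obtain ⟨⟨r₂, hr₂J, hr₂⟩, hfg₂, hloc₂⟩ := h₂
  refine ⟨⟨(r₁, r₂), ⟨hr₁J, hr₂J⟩, Prod.mk_mem_nonZeroDivisors hr₁ hr₂⟩, hfg₁.prod hfg₂,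
    fun M hM => ?_⟩
  obtain ⟨P, _, rfl⟩ | ⟨Q, _, rfl⟩ := (ideal_prod_prime M).mp hM.isPrime
  · exact isPrincipal_map_atPrime_prod_top (hloc₁ P hM.of_prod_top) J₂
  · let e : S × R ≃+* R × S := RingEquiv.prodComm
    have hQ : (Ideal.prod Q (⊤ : Ideal R)).IsMaximal := by
      simpa using hM.map_bijective ((RingEquiv.prodComm : R × S ≃+* S × R) : R × S →+* S × R)
        RingEquiv.prodComm.bijective
    have hunit (s : (Ideal.prod Q (⊤ : Ideal R)).primeCompl) :
        IsUnit (algebraMap (R × S) (Localization.AtPrime (Ideal.prod (⊤ : Ideal R) Q)) (e s)) :=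
      IsLocalization.map_units (M := (Ideal.prod ⊤ Q).primeCompl) _
        ⟨e s, show e s ∉ Ideal.prod ⊤ Q from fun h => s.2 ⟨h.2, trivial⟩⟩
    rw [← map_prodComm_prod (R := S) J₂ J₁, Ideal.map_map]
    exact isPrincipal_map_of_isUnit
      (isPrincipal_map_atPrime_prod_top (hloc₂ Q hQ.of_prod_top) J₁) _ hunit

theorem Ideal.IsRadical.map_of_surjective {f : R →+* S} (hf : Function.Surjective f)
    {H : Ideal R} (hH : H.IsRadical) (hk : RingHom.ker f ≤ H) : (H.map f).IsRadical := by
  rw [← radical_eq_iff, ← map_radical_of_surjective hf hk, hH.radical]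

theorem Ideal.map_ne_top_of_surjective {f : R →+* S} (hf : Function.Surjective f) {H : Ideal R}
    (hH : H ≠ ⊤) (hk : RingHom.ker f ≤ H) : H.map f ≠ ⊤ := fun h =>
  hH <| by simpa [h, sup_eq_left.mpr hk, eq_comm] using comap_map_of_surjective' f hf H

theorem IsStronglyISPRing.of_surjective (h : IsStronglyISPRing R) {f : R →+* S}
    (hf : Function.Surjective f) (hreg : ∀ x ∈ nonZeroDivisors R, f x ∈ nonZeroDivisors S) :
    IsStronglyISPRing S := by
  intro K hK
  have hK' : K.comap f ≠ ⊤ := fun h =>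
    hK (by rw [← map_comap_of_surjective f hf K, h, Ideal.map_top])
  obtain ⟨J, L, hJ, hL, hLrad, hfac⟩ := h _ hK'
  have hker (H : Ideal R) (hH : H ∈ L) : RingHom.ker f ≤ H :=
    calc RingHom.ker f ≤ K.comap f := comap_mono bot_le
      _ = J * L.prod := hfac
      _ ≤ H := mul_le_right.trans (le_of_dvd (List.dvd_prod hH))
  refine ⟨J.map f, L.map (Ideal.map f), hJ.map_of_surjective hf hreg, by simpa using hL, ?_, ?_⟩
  · simp only [List.mem_map]
    rintro _ ⟨H, hH, rfl⟩
    exact ⟨map_ne_top_of_surjective hf (hLrad H hH).1 (hker H hH),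
      (hLrad H hH).2.map_of_surjective hf (hker H hH)⟩
  · rw [← map_comap_of_surjective f hf K, hfac, Ideal.map_mul]
    exact congrArg _ (map_list_prod (mapHom f) L)

theorem IsStronglyISPRing.of_ringEquiv (h : IsStronglyISPRing R) (e : R ≃+* S) :
    IsStronglyISPRing S :=
  h.of_surjective (f := e) e.surjective fun _ hx =>
    MulEquivClass.map_nonZeroDivisors e ▸ Submonoid.mem_map_of_mem e hx

theorem IsStronglyISPRing.exists_factorization (h : IsStronglyISPRing R) (X : Ideal R) :
    ∃ (J : Ideal R) (L : List (Ideal R)), J.IsInvertibleIdeal ∧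
      (∀ H ∈ L, H ≠ ⊤ ∧ H.IsRadical) ∧ X = J * L.prod ∧ (L = [] → X = ⊤) := by
  by_cases hX : X = ⊤
  · exact ⟨⊤, [], isInvertibleIdeal_top, by simp, by simp [hX], fun _ => hX⟩
  · obtain ⟨J, L, hJ, hL, hLrad, hfac⟩ := h X hX
    exact ⟨J, L, hJ, hLrad, hfac, fun h => absurd h hL⟩

theorem IsStronglyISPRing.prod (hR : IsStronglyISPRing R) (hS : IsStronglyISPRing S) :
    IsStronglyISPRing (R × S) := by
  intro W hW
  obtain ⟨J₁, L₁, hJ₁, hL₁, hfac₁, hnil₁⟩ :=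
    hR.exists_factorization (W.map (RingHom.fst R S))
  obtain ⟨J₂, L₂, hJ₂, hL₂, hfac₂, hnil₂⟩ :=
    hS.exists_factorization (W.map (RingHom.snd R S))
  refine ⟨Ideal.prod J₁ J₂, L₁.map (Ideal.prod · ⊤) ++ L₂.map (Ideal.prod ⊤ ·),
    hJ₁.prod hJ₂, fun hnil => hW ?_, ?_, ?_⟩
  · obtain ⟨rfl, rfl⟩ : L₁ = [] ∧ L₂ = [] := by simpa using hnil
    rw [ideal_prod_eq W, hnil₁ rfl, hnil₂ rfl, prod_top_top]
  · simp only [List.mem_append, List.mem_map]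
    rintro _ (⟨H, hH, rfl⟩ | ⟨H, hH, rfl⟩)
    · exact ⟨by simpa using (hL₁ H hH).1, (hL₁ H hH).2.prod le_top⟩
    · exact ⟨by simpa using (hL₂ H hH).1, IsRadical.prod le_top (hL₂ H hH).2⟩
  · rw [ideal_prod_eq W, hfac₁, hfac₂, List.prod_append, list_prod_map_prod_top,
      list_prod_map_top_prod, prod_mul_prod, prod_mul_prod, mul_top, top_mul]

end

namespace IsIdempotentElem

variable {A : Type*} [CommRing A] {e : A}

theorem mem_span_one_sub_iff (he : IsIdempotentElem e) {x : A} :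
    x ∈ Ideal.span {1 - e} ↔ x * e = 0 := by
  rw [← he.ker_toSpanSingleton_eq_span, LinearMap.mem_ker, LinearMap.toSpanSingleton_apply,
    smul_eq_mul]

theorem mem_span_iff (he : IsIdempotentElem e) {x : A} :
    x ∈ Ideal.span {e} ↔ x * (1 - e) = 0 := by
  simpa using he.one_sub.mem_span_one_sub_iff

theorem quotientMk_mem_nonZeroDivisors (he : IsIdempotentElem e) {x : A}
    (hx : x ∈ nonZeroDivisors A) :
    Ideal.Quotient.mk (Ideal.span {1 - e}) x ∈ nonZeroDivisors (A ⧸ Ideal.span {1 - e}) := by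
  rw [mem_nonZeroDivisors_iff_right] at hx ⊢
  intro z hz
  obtain ⟨y, rfl⟩ := Ideal.Quotient.mk_surjective z
  rw [← map_mul, Ideal.Quotient.eq_zero_iff_mem, he.mem_span_one_sub_iff, mul_right_comm] at hz
  rw [Ideal.Quotient.eq_zero_iff_mem, he.mem_span_one_sub_iff]
  exact hx _ hz

end IsIdempotentElem

namespace AmalgDup

variable {A : Type*} [CommRing A] {I : Ideal A}

theorem mem_iff {p : A × A} : p ∈ AmalgDup I ↔ p.2 - p.1 ∈ I := Iff.rfl

def fst (I : Ideal A) : AmalgDup I →+* A := (RingHom.fst A A).comp (AmalgDup I).subtype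

def snd (I : Ideal A) : AmalgDup I →+* A := (RingHom.snd A A).comp (AmalgDup I).subtype

@[simp]
theorem fst_apply (x : AmalgDup I) : fst I x = (x : A × A).1 := rfl

@[simp]
theorem snd_apply (x : AmalgDup I) : snd I x = (x : A × A).2 := rfl

def diag (a : A) : AmalgDup I := ⟨(a, a), by simp [mem_iff]⟩

theorem fst_surjective : Function.Surjective (fst I) := fun a => ⟨diag a, rfl⟩

theorem fst_mem_nonZeroDivisors {x : AmalgDup I} (hx : x ∈ nonZeroDivisors (AmalgDup I)) :
    fst I x ∈ nonZeroDivisors A := by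
  obtain ⟨⟨a, b⟩, hab⟩ := x
  have hba : b - a ∈ I := hab
  rw [mem_nonZeroDivisors_iff_right] at hx ⊢
  intro t ht
  change t * a = 0 at ht
  have hy : (((b - a) * t, 0) : A × A) ∈ AmalgDup I := by
    simpa [mem_iff] using I.mul_mem_right t hba
  have hbt : (b - a) * t = 0 :=
    congrArg (fst I) (hx ⟨_, hy⟩ (Subtype.ext (by simp [mul_assoc, ht])))
  have htb : t * b = 0 := by linear_combination ht + hbt
  exact congrArg (fst I) (hx (diag t) (Subtype.ext (by simp [diag, ht, htb])))

variable {e : A}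

theorem bijective_fst_prod_mk_snd (he : IsIdempotentElem e) :
    Function.Bijective ((fst (Ideal.span {e})).prod
      ((Ideal.Quotient.mk (Ideal.span {1 - e})).comp (snd (Ideal.span {e})))) := by
  constructor
  · rw [injective_iff_map_eq_zero]
    rintro ⟨⟨a, b⟩, hab⟩ hx
    obtain ⟨rfl : a = 0, hb⟩ := Prod.mk_eq_zero.mp hx
    have hbe : b * e = 0 := he.mem_span_one_sub_iff.mp (Ideal.Quotient.eq_zero_iff_mem.mp hb)
    have hbe' : b * (1 - e) = 0 := he.mem_span_iff.mp (by simpa [mem_iff] using hab)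
    exact Subtype.ext (Prod.ext rfl (show b = 0 by linear_combination hbe + hbe'))
  · rintro ⟨a, z⟩
    obtain ⟨y, rfl⟩ := Ideal.Quotient.mk_surjective z
    have hmem : (a, a + e * (y - a)) ∈ AmalgDup (Ideal.span {e}) := by
      simpa [mem_iff] using Ideal.mul_mem_right (y - a) _ (Ideal.mem_span_singleton_self e)
    refine ⟨⟨_, hmem⟩, Prod.ext rfl (Ideal.Quotient.eq.mpr ?_)⟩
    convert Ideal.mul_mem_left _ (a - y) (Ideal.mem_span_singleton_self (1 - e)) using 1
    simp only [snd_apply]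
    ring

noncomputable def equivProdQuotient (he : IsIdempotentElem e) :
    AmalgDup (Ideal.span {e}) ≃+* A × (A ⧸ Ideal.span {1 - e}) :=
  RingEquiv.ofBijective _ (bijective_fst_prod_mk_snd he)

end AmalgDup

/-- (1) If `A ⋈ I` is a strongly ISP-ring then so is `A`.  (2) If `I` is a finitely
generated idempotent ideal, then `A ⋈ I` is a strongly ISP-ring iff `A` is. -/
theorem amalgDup_stronglyISPRing {A : Type*} [CommRing A] (I : Ideal A) :
    (IsStronglyISPRing (AmalgDup I) → IsStronglyISPRing A) ∧
      (I.FG → I * I = I →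
        (IsStronglyISPRing (AmalgDup I) ↔ IsStronglyISPRing A)) := by
  have descent (h : IsStronglyISPRing (AmalgDup I)) : IsStronglyISPRing A :=
    h.of_surjective AmalgDup.fst_surjective fun _ => AmalgDup.fst_mem_nonZeroDivisors
  refine ⟨descent, fun hfg hidem => ⟨descent, fun hA => ?_⟩⟩
  obtain ⟨e, he, rfl⟩ := (Ideal.isIdempotentElem_iff_of_fg I hfg).mp hidem
  have hquot : IsStronglyISPRing (A ⧸ Ideal.span {1 - e}) :=
    hA.of_surjective Ideal.Quotient.mk_surjective fun _ => he.quotientMk_mem_nonZeroDivisors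
  exact (hA.prod hquot).of_ringEquiv (AmalgDup.equivProdQuotient he).symm
end
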